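/- arXiv:1603.05647 — 11 statements merged into one kernel-verified Lean document; each statement's English description precedes it below -/
import Mathlib

section
/- Let R be a ring and let M be a nonzero left R-module that is virtually semisimple. If M = M₁ ⊕ M₂ is an internal direct sum decomposition of M into submodules M₁ and M₂ such that every R-linear map from M₁ to M₂ is zero, then M₂ is a virtually semisimple R-module. -/
universe u v w

/-- A left `R`-module `M` is *virtually semisimple* if every submodule of `M` is
isomorphic, as an `R`-module, to a direct summand of `M`. -/
def IsVirtuallySemisimple (R : Type u) [Ring R] (M : Type v) [AddCommGroup M] [Module R M] :
    Prop :=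
  ∀ N : Submodule R M, ∃ K : Submodule R M, (∃ K' : Submodule R M, IsCompl K K') ∧
    Nonempty (N ≃ₗ[R] K)

/-- A module is *completely virtually semisimple* if every submodule is virtually semisimple. -/
def IsCompletelyVirtuallySemisimple (R : Type u) [Ring R] (M : Type v) [AddCommGroup M]
    [Module R M] : Prop :=
  ∀ N : Submodule R M, IsVirtuallySemisimple R N

/-!
Given `N ≤ M₂`, virtual semisimplicity of `M` gives `M = K ⊕ K'` with `N ≅ K`. Since `K` embeds
into `M₂`, every map `M₁ → K` vanishes, so the projection onto `K` along `K'` kills `M₁`, i.e.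
`M₁ ≤ K'`. The projection `π` onto `M₂` along `M₁` is then injective on `K`, and since
`x - π x ∈ M₁ ≤ K'` for all `x`, it carries the decomposition `K ⊕ K'` of `M` to a decomposition
`π K ⊕ (K' ∩ M₂)` of `M₂`, with `π K ≅ K ≅ N`.
-/

variable {R M M' : Type*} [Ring R] [AddCommGroup M] [Module R M] [AddCommGroup M'] [Module R M']

theorem LinearMap.forall_eq_zero_of_injective {A B C : Type*} [AddCommGroup A] [Module R A]
    [AddCommGroup B] [Module R B] [AddCommGroup C] [Module R C]
    (h : ∀ f : A →ₗ[R] B, f = 0) {g : C →ₗ[R] B} (hg : Function.Injective g) :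
    ∀ f : A →ₗ[R] C, f = 0 :=
  fun f => (LinearMap.cancel_left hg).mp (by rw [h (g ∘ₗ f), LinearMap.comp_zero])

namespace Submodule

variable {K K' P p q : Submodule R M}

theorem le_of_forall_linearMap_eq_zero (hKK' : IsCompl K K') (h : ∀ f : P →ₗ[R] K, f = 0) :
    P ≤ K' := by
  intro x hx
  rw [← ker_projectionOnto hKK']
  exact LinearMap.congr_fun (h (K.projectionOnto K' hKK' ∘ₗ P.subtype)) ⟨x, hx⟩

noncomputable def equivMapOfDisjointKer {f : M →ₗ[R] M'} (hK : Disjoint K (LinearMap.ker f)) :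
    K ≃ₗ[R] K.map f :=
  (LinearEquiv.ofInjective _ (LinearMap.injective_domRestrict_iff.mpr hK)).trans
    (LinearEquiv.ofEq _ _ (LinearMap.range_domRestrict K f))

theorem projectionOnto_mem_comap_subtype_iff (hpq : IsCompl p q) (hqP : q ≤ P) (x : M) :
    p.projectionOnto q hpq x ∈ P.comap p.subtype ↔ x ∈ P := by
  rw [mem_comap, subtype_apply, coe_projectionOnto_apply,
    ← sub_sub_cancel x (p.projection q hpq x)]
  exact P.sub_mem_iff_left (hqP (sub_projection_mem hpq x))

theorem isCompl_map_projectionOnto_comap_subtype (hpq : IsCompl p q) (hKK' : IsCompl K K')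
    (hqK' : q ≤ K') : IsCompl (K.map (p.projectionOnto q hpq)) (K'.comap p.subtype) := by
  constructor
  · rw [disjoint_def]
    rintro _ ⟨k, hk, rfl⟩ hk'
    have hk0 : k = 0 :=
      disjoint_def.mp hKK'.disjoint k hk ((projectionOnto_mem_comap_subtype_iff hpq hqK' k).mp hk')
    rw [hk0, map_zero]
  · rw [codisjoint_iff_exists_add_eq]
    intro m
    obtain ⟨k, k', hk, hk', hsum⟩ := codisjoint_iff_exists_add_eq.mp hKK'.codisjoint (m : M)
    refine ⟨_, _, mem_map_of_mem hk,
      (projectionOnto_mem_comap_subtype_iff hpq hqK' k').mpr hk', ?_⟩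
    rw [← map_add, hsum, projectionOnto_apply_left]

end Submodule

theorem stmt_0_general (R : Type u) [Ring R] (M : Type v) [AddCommGroup M] [Module R M]
    (hM : IsVirtuallySemisimple R M)
    (M₁ M₂ : Submodule R M) (hcompl : IsCompl M₁ M₂)
    (hhom : ∀ f : M₁ →ₗ[R] M₂, f = 0) :
    IsVirtuallySemisimple R M₂ := by
  intro N
  obtain ⟨K, ⟨K', hKK'⟩, ⟨e⟩⟩ := hM (N.map M₂.subtype)
  let eNK : N ≃ₗ[R] K := (N.equivMapOfInjective _ M₂.injective_subtype).trans e
  have hM₁K' : M₁ ≤ K' :=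
    Submodule.le_of_forall_linearMap_eq_zero hKK' <| LinearMap.forall_eq_zero_of_injective hhom
      (g := N.subtype ∘ₗ eNK.symm.toLinearMap) (N.injective_subtype.comp eNK.symm.injective)
  have hKker : Disjoint K (LinearMap.ker (M₂.projectionOnto M₁ hcompl.symm)) := by
    rw [Submodule.ker_projectionOnto]
    exact hKK'.disjoint.mono_right hM₁K'
  exact ⟨_, ⟨_, Submodule.isCompl_map_projectionOnto_comap_subtype hcompl.symm hKK' hM₁K'⟩,
    ⟨eNK.trans (Submodule.equivMapOfDisjointKer hKker)⟩⟩

/-- If `M` is a nonzero virtually semisimple module and `M = M₁ ⊕ M₂` is an internal direct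
sum decomposition such that every `R`-linear map `M₁ → M₂` is zero, then `M₂` is a virtually
semisimple `R`-module. -/
theorem stmt_0 (R : Type u) [Ring R] (M : Type v) [AddCommGroup M] [Module R M]
    [Nontrivial M] (hM : IsVirtuallySemisimple R M)
    (M₁ M₂ : Submodule R M) (hcompl : IsCompl M₁ M₂)
    (hhom : ∀ f : M₁ →ₗ[R] M₂, f = 0) :
    IsVirtuallySemisimple R M₂ :=
  stmt_0_general R M hM M₁ M₂ hcompl hhom
end

section
/- Let R be a ring, M a virtually semisimple left R-module, and W a submodule of M with the property that every submodule K of M that embeds R-linearly into W is contained in W. Then W is a virtually semisimple R-module, and there is a direct summand K of M such that K ≅ W and K is a direct summand of W (i.e., K ⊕ K' = W for some submodule K' of W). In particular, if W is Dedekind finite, then W is itself a direct summand of M. -/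
universe u v w

/-- A module `W` is *Dedekind finite* if `W ≅ W ⊕ N` implies `N = 0`. -/
def IsDedekindFiniteModule (R : Type u) [Ring R] (W : Type v) [AddCommGroup W] [Module R W] :
    Prop :=
  ∀ (N : Type v) [AddCommGroup N] [Module R N], Nonempty (W ≃ₗ[R] W × N) → Subsingleton N

/-!
Applying virtual semisimplicity of `M` to a submodule `N ≤ W` gives a direct summand `K ≅ N`
of `M`; since `K` embeds into `W`, the hypothesis on `W` forces `K ≤ W`, and by modularity a
direct summand of `M` lying inside `W` is a direct summand of `W`. Taking `N = W` yields a
summand `K ≅ W` of both `M` and `W`; if `W` is Dedekind finite, its complement in `W` is zero,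
so `W = K` is a direct summand of `M`.
-/

theorem IsCompl.inf_eq_bot_and_sup_inf_eq {α : Type*} [Lattice α] [BoundedOrder α]
    [IsModularLattice α] {a b c : α} (h : IsCompl b c) (hba : b ≤ a) :
    b ⊓ (c ⊓ a) = ⊥ ∧ b ⊔ c ⊓ a = a :=
  ⟨(h.disjoint.mono_right inf_le_left).eq_bot,
    by rw [← sup_inf_assoc_of_le c hba, h.sup_eq_top, top_inf_eq]⟩

theorem IsDedekindFiniteModule.eq_top_of_isCompl {R : Type u} [Ring R] {W : Type v}
    [AddCommGroup W] [Module R W] (hW : IsDedekindFiniteModule R W) {p q : Submodule R W}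
    (hpq : IsCompl p q) (e : p ≃ₗ[R] W) : p = ⊤ := by
  have : Subsingleton q :=
    hW q ⟨(Submodule.prodEquivOfIsCompl p q hpq).symm.trans (e.prodCongr (.refl R q))⟩
  rw [Submodule.eq_bot_of_subsingleton (p := q)] at hpq
  exact eq_top_of_isCompl_bot hpq

section EmbeddingClosed

variable {R : Type u} [Ring R] {M : Type v} [AddCommGroup M] [Module R M] {W : Submodule R M}

theorem IsVirtuallySemisimple.exists_isComplemented_le_equiv (hM : IsVirtuallySemisimple R M)
    (hW : ∀ K : Submodule R M, (∃ f : K →ₗ[R] W, Function.Injective f) → K ≤ W)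
    {N : Submodule R M} (hN : N ≤ W) :
    ∃ K : Submodule R M, IsComplemented K ∧ K ≤ W ∧ Nonempty (K ≃ₗ[R] N) := by
  obtain ⟨K, hK, ⟨e⟩⟩ := hM N
  refine ⟨K, hK, hW K ⟨Submodule.inclusion hN ∘ₗ e.symm.toLinearMap, ?_⟩, ⟨e.symm⟩⟩
  exact (Submodule.inclusion_injective hN).comp e.symm.injective

theorem IsVirtuallySemisimple.submodule_of_embeddings_le (hM : IsVirtuallySemisimple R M)
    (hW : ∀ K : Submodule R M, (∃ f : K →ₗ[R] W, Function.Injective f) → K ≤ W) :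
    IsVirtuallySemisimple R W := by
  intro N
  obtain ⟨L, ⟨L', hLL'⟩, hLW, ⟨e⟩⟩ :=
    hM.exists_isComplemented_le_equiv hW (Submodule.map_subtype_le W N)
  refine ⟨L.comap W.subtype, ⟨L'.comap W.subtype,
    Submodule.isCompl_comap_subtype_of_isCompl_of_le hLL' hLW⟩, ⟨?_⟩⟩
  exact (Submodule.equivMapOfInjective W.subtype W.injective_subtype N).trans e.symm
    |>.trans (Submodule.comapSubtypeEquivOfLe hLW).symm

end EmbeddingClosed

/-- Let `M` be virtually semisimple and `W` a submodule containing every submodule `K` of `M`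
that embeds into `W`.  Then `W` is virtually semisimple, and there is a direct summand `K` of
`M` with `K ≅ W` and `K ⊕ K' = W` for some submodule `K'`.  In particular, if `W` is Dedekind
finite then `W` is a direct summand of `M`. -/
theorem stmt_3 (R : Type u) [Ring R] (M : Type v) [AddCommGroup M] [Module R M]
    (hM : IsVirtuallySemisimple R M) (W : Submodule R M)
    (hW : ∀ K : Submodule R M, (∃ f : K →ₗ[R] W, Function.Injective f) → K ≤ W) :
    IsVirtuallySemisimple R W ∧
    (∃ K : Submodule R M, (∃ K'' : Submodule R M, IsCompl K K'') ∧ Nonempty (K ≃ₗ[R] W) ∧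
      ∃ K' : Submodule R M, K' ≤ W ∧ K ⊓ K' = ⊥ ∧ K ⊔ K' = W) ∧
    (IsDedekindFiniteModule R W → ∃ W' : Submodule R M, IsCompl W W') := by
  obtain ⟨K, ⟨K'', hKK''⟩, hKW, ⟨e⟩⟩ := hM.exists_isComplemented_le_equiv hW le_rfl
  obtain ⟨hinf, hsup⟩ := hKK''.inf_eq_bot_and_sup_inf_eq hKW
  refine ⟨hM.submodule_of_embeddings_le hW,
    ⟨K, ⟨K'', hKK''⟩, ⟨e⟩, K'' ⊓ W, inf_le_right, hinf, hsup⟩, fun hDF => ?_⟩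
  have hKtop : K.comap W.subtype = ⊤ :=
    hDF.eq_top_of_isCompl (Submodule.isCompl_comap_subtype_of_isCompl_of_le hKK'' hKW)
      ((Submodule.comapSubtypeEquivOfLe hKW).trans e)
  have hWK : W = K := le_antisymm (Submodule.comap_subtype_eq_top.mp hKtop) hKW
  exact ⟨K'', hWK ▸ hKK''⟩
end

section
/- Let R₁, …, Rₙ be rings, let T = R₁ × ⋯ × Rₙ be their product ring, and for each i let Mᵢ be a left Rᵢ-module; regard M = M₁ × ⋯ × Mₙ as a left T-module with componentwise action. Then M is a virtually semisimple T-module if and only if each Mᵢ is a virtually semisimple Rᵢ-module, and M is a completely virtually semisimple T-module if and only if each Mᵢ is a completely virtually semisimple Rᵢ-module. -/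
universe u v w

section Aux

variable {n : ℕ} {R : Fin n → Type u} [∀ i, Ring (R i)]

section Pi
variable {A : Fin n → Type*} [∀ i, AddCommGroup (A i)] [∀ i, Module (R i) (A i)]
variable {B : Fin n → Type*} [∀ i, AddCommGroup (B i)] [∀ i, Module (R i) (B i)]

/-- `e_i • v = Pi.single i (v i)` in a pi module over a pi ring. -/
lemma single_one_smul (i : Fin n) (v : ∀ j, A j) :
    (Pi.single i (1 : R i)) • v = Pi.single i (v i) := by
  funext j
  rcases eq_or_ne j i with rfl | h
  · simp [Pi.smul_apply']
  · simp [Pi.smul_apply', Pi.single_eq_of_ne h]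

lemma single_smul_single (i : Fin n) (s : R i) (x : A i) :
    (Pi.single i s : ∀ j, R j) • (Pi.single i x : ∀ j, A j) = Pi.single i (s • x) := by
  funext j
  rcases eq_or_ne j i with rfl | h
  · simp [Pi.smul_apply']
  · simp [Pi.smul_apply', Pi.single_eq_of_ne h]

/-- Componentwise linear equivalences give a `T`-linear equivalence of pi modules. -/
def piCongr (f : ∀ i, A i ≃ₗ[R i] B i) : (∀ i, A i) ≃ₗ[∀ i, R i] (∀ i, B i) where
  toFun v := fun i => f i (v i)
  invFun v := fun i => (f i).symm (v i)
  left_inv v := by funext i; simp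
  right_inv v := by funext i; simp
  map_add' v w := by funext i; simp
  map_smul' r v := by funext i; simp [Pi.smul_apply']

/-- A `T`-linear equivalence of pi modules restricts to components. -/
def componentEquiv (g : (∀ i, A i) ≃ₗ[∀ i, R i] (∀ i, B i)) (i : Fin n) :
    A i ≃ₗ[R i] B i where
  toFun x := (g (Pi.single i x)) i
  invFun y := (g.symm (Pi.single i y)) i
  left_inv x := by
    show (g.symm (Pi.single i ((g (Pi.single i x)) i))) i = x
    have h1 : Pi.single i ((g (Pi.single i x)) i) = g (Pi.single i x) := by
      rw [← single_one_smul (R := R) i (g (Pi.single i x)), ← map_smul,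
        single_one_smul (R := R) i (Pi.single i x), Pi.single_eq_same]
    rw [h1, g.symm_apply_apply, Pi.single_eq_same]
  right_inv y := by
    show (g (Pi.single i ((g.symm (Pi.single i y)) i))) i = y
    have h1 : Pi.single i ((g.symm (Pi.single i y)) i) = g.symm (Pi.single i y) := by
      rw [← single_one_smul (R := R) i (g.symm (Pi.single i y)), ← map_smul,
        single_one_smul (R := R) i (Pi.single i y), Pi.single_eq_same]
    rw [h1, g.apply_symm_apply, Pi.single_eq_same]
  map_add' x x' := by
    show (g (Pi.single i (x + x'))) i = (g (Pi.single i x)) i + (g (Pi.single i x')) i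
    rw [Pi.single_add, map_add, Pi.add_apply]
  map_smul' s x := by
    show (g (Pi.single i (s • x))) i = s • (g (Pi.single i x)) i
    rw [← single_smul_single (R := R) i s x, map_smul, Pi.smul_apply', Pi.single_eq_same]

end Pi

variable {M : Fin n → Type v} [∀ i, AddCommGroup (M i)] [∀ i, Module (R i) (M i)]

/-- The `i`-th component of a submodule of a pi module over a pi ring. -/
def comp (i : Fin n) (N : Submodule (∀ i, R i) (∀ i, M i)) : Submodule (R i) (M i) where
  carrier := {x | ∃ m ∈ N, m i = x}
  add_mem' := by
    rintro a b ⟨m, hm, rfl⟩ ⟨m', hm', rfl⟩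
    exact ⟨m + m', N.add_mem hm hm', rfl⟩
  zero_mem' := ⟨0, N.zero_mem, rfl⟩
  smul_mem' := by
    rintro s a ⟨m, hm, rfl⟩
    refine ⟨Pi.single i s • m, N.smul_mem _ hm, ?_⟩
    simp [Pi.smul_apply']

lemma mem_comp {i : Fin n} {N : Submodule (∀ i, R i) (∀ i, M i)} {x : M i} :
    x ∈ comp i N ↔ ∃ m ∈ N, m i = x := Iff.rfl

lemma apply_mem_comp {N : Submodule (∀ i, R i) (∀ i, M i)} {m : ∀ i, M i} (hm : m ∈ N)
    (i : Fin n) : m i ∈ comp i N := ⟨m, hm, rfl⟩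

lemma single_mem {N : Submodule (∀ i, R i) (∀ i, M i)} {i : Fin n} {x : M i}
    (hx : x ∈ comp i N) : Pi.single i x ∈ N := by
  obtain ⟨m, hm, rfl⟩ := hx
  rw [← single_one_smul (R := R) i m]
  exact N.smul_mem _ hm

lemma mem_iff_comp {N : Submodule (∀ i, R i) (∀ i, M i)} {m : ∀ i, M i} :
    m ∈ N ↔ ∀ i, m i ∈ comp i N := by
  refine ⟨fun hm i => apply_mem_comp hm i, fun h => ?_⟩
  have : m = ∑ i, Pi.single i (m i) := by
    funext j; rw [Finset.sum_apply]
    simp [Pi.single_apply]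
  rw [this]
  exact Submodule.sum_mem _ fun i _ => single_mem (h i)

/-- The submodule of the pi module built from a family of submodules. -/
def piSub (C : ∀ i, Submodule (R i) (M i)) : Submodule (∀ i, R i) (∀ i, M i) where
  carrier := {m | ∀ i, m i ∈ C i}
  add_mem' ha hb i := (C i).add_mem (ha i) (hb i)
  zero_mem' i := (C i).zero_mem
  smul_mem' r m hm i := by
    rw [Pi.smul_apply']; exact (C i).smul_mem _ (hm i)

lemma mem_piSub {C : ∀ i, Submodule (R i) (M i)} {m : ∀ i, M i} :
    m ∈ piSub C ↔ ∀ i, m i ∈ C i := Iff.rfl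

lemma comp_piSub (C : ∀ i, Submodule (R i) (M i)) (i : Fin n) : comp i (piSub C) = C i := by
  ext x
  constructor
  · rintro ⟨m, hm, rfl⟩; exact hm i
  · intro hx
    refine ⟨Pi.single i x, fun j => ?_, Pi.single_eq_same i x⟩
    rcases eq_or_ne j i with rfl | h
    · simpa using hx
    · rw [Pi.single_eq_of_ne h]; exact (C j).zero_mem

lemma piSub_comp (N : Submodule (∀ i, R i) (∀ i, M i)) : piSub (fun i => comp i N) = N := by
  ext m; rw [mem_piSub, mem_iff_comp]

/-- A submodule is `T`-linearly equivalent to the pi of its components. -/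
def toPi (N : Submodule (∀ i, R i) (∀ i, M i)) : N ≃ₗ[∀ i, R i] ∀ i, comp i N where
  toFun m := fun i => ⟨m.1 i, apply_mem_comp m.2 i⟩
  invFun v := ⟨fun i => (v i).1, mem_iff_comp.2 fun i => (v i).2⟩
  left_inv m := rfl
  right_inv v := rfl
  map_add' m m' := rfl
  map_smul' r m := rfl

lemma comp_isCompl {K K' : Submodule (∀ i, R i) (∀ i, M i)} (h : IsCompl K K') (i : Fin n) :
    IsCompl (comp i K) (comp i K') := by
  constructor
  · rw [disjoint_iff_inf_le]
    rintro x ⟨hx, hx'⟩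
    have h1 : Pi.single i x ∈ K ⊓ K' := ⟨single_mem hx, single_mem hx'⟩
    rw [h.inf_eq_bot] at h1
    have := congrFun h1 i
    simpa using this
  · rw [codisjoint_iff_le_sup]
    intro x _
    have h1 : (Pi.single i x : ∀ j, M j) ∈ K ⊔ K' := by rw [h.sup_eq_top]; trivial
    obtain ⟨y, hy, z, hz, hyz⟩ := Submodule.mem_sup.1 h1
    have : x = y i + z i := by
      have := congrFun hyz i
      simp only [Pi.single_eq_same] at this
      rw [← this]; rfl
    rw [this]
    exact Submodule.add_mem _ (Submodule.mem_sup_left (apply_mem_comp hy i))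
      (Submodule.mem_sup_right (apply_mem_comp hz i))

lemma vs_congr {R₀ : Type u} [Ring R₀] {M₁ : Type v} {M₂ : Type w} [AddCommGroup M₁]
    [AddCommGroup M₂] [Module R₀ M₁] [Module R₀ M₂] (e : M₁ ≃ₗ[R₀] M₂)
    (h : IsVirtuallySemisimple R₀ M₁) : IsVirtuallySemisimple R₀ M₂ := by
  intro N
  obtain ⟨K, ⟨K', hK⟩, ⟨eq⟩⟩ := h (N.map (e.symm : M₂ →ₗ[R₀] M₁))
  refine ⟨K.map (e : M₁ →ₗ[R₀] M₂), ⟨K'.map (e : M₁ →ₗ[R₀] M₂), ?_⟩,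
    ⟨(e.symm.submoduleMap N).trans (eq.trans (e.submoduleMap K))⟩⟩
  exact (Submodule.orderIsoMapComap e).isCompl hK

lemma piSub_isCompl {C C' : ∀ i, Submodule (R i) (M i)} (h : ∀ i, IsCompl (C i) (C' i)) :
    IsCompl (piSub C) (piSub C') := by
  constructor
  · rw [disjoint_iff_inf_le]
    rintro m ⟨hm, hm'⟩
    have : ∀ i, m i = 0 := fun i => by
      have h1 : m i ∈ C i ⊓ C' i := ⟨hm i, hm' i⟩
      rw [(h i).inf_eq_bot] at h1
      exact h1
    funext i; exact this i
  · rw [codisjoint_iff_le_sup]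
    intro m _
    have h1 : ∀ i, ∃ y ∈ C i, ∃ z ∈ C' i, y + z = m i := fun i => by
      have : m i ∈ C i ⊔ C' i := by rw [(h i).sup_eq_top]; trivial
      exact Submodule.mem_sup.1 this
    choose y hy z hz hyz using h1
    have : m = y + z := by funext i; rw [Pi.add_apply, hyz i]
    rw [this]
    exact Submodule.add_mem _ (Submodule.mem_sup_left hy) (Submodule.mem_sup_right hz)

lemma prod_vs :
    IsVirtuallySemisimple (∀ i, R i) (∀ i, M i) ↔ ∀ i, IsVirtuallySemisimple (R i) (M i) := by
  constructor
  · intro h i Ni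
    set C : ∀ j, Submodule (R j) (M j) :=
      Function.update (fun j => (⊥ : Submodule (R j) (M j))) i Ni with hC
    obtain ⟨K, ⟨K', hK⟩, ⟨e⟩⟩ := h (piSub C)
    refine ⟨comp i K, ⟨comp i K', comp_isCompl hK i⟩, ?_⟩
    have e2 : comp i (piSub C) ≃ₗ[R i] comp i K :=
      componentEquiv ((toPi (piSub C)).symm.trans (e.trans (toPi K))) i
    have hNi : Ni = comp i (piSub C) := by rw [comp_piSub, hC, Function.update_self]
    exact ⟨(LinearEquiv.ofEq _ _ hNi).trans e2⟩
  · intro h N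
    choose K hK e using fun i => h i (comp i N)
    choose K' hK' using hK
    refine ⟨piSub K, ⟨piSub K', piSub_isCompl hK'⟩, ?_⟩
    have f : ∀ i, comp i N ≃ₗ[R i] comp i (piSub K) := fun i =>
      (Classical.choice (e i)).trans (LinearEquiv.ofEq _ _ (comp_piSub K i).symm)
    exact ⟨(toPi N).trans ((piCongr f).trans (toPi (piSub K)).symm)⟩

lemma prod_cvs :
    IsCompletelyVirtuallySemisimple (∀ i, R i) (∀ i, M i) ↔
      ∀ i, IsCompletelyVirtuallySemisimple (R i) (M i) := by
  constructor
  · intro h i Ni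
    set C : ∀ j, Submodule (R j) (M j) :=
      Function.update (fun j => (⊥ : Submodule (R j) (M j))) i Ni with hC
    have h1 := vs_congr (toPi (piSub C)) (h (piSub C))
    have h2 := (prod_vs (M := fun j => comp j (piSub C))).1 h1 i
    have hNi : comp i (piSub C) = Ni := by rw [comp_piSub, hC, Function.update_self]
    exact vs_congr (LinearEquiv.ofEq _ _ hNi) h2
  · intro h N
    have h1 : ∀ i, IsVirtuallySemisimple (R i) (comp i N) := fun i => h i (comp i N)
    exact vs_congr (toPi N).symm ((prod_vs (M := fun j => comp j N)).2 h1)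

end Aux

/-- For rings `R₁, …, Rₙ` with `T = R₁ × ⋯ × Rₙ` and `Rᵢ`-modules `Mᵢ`, the `T`-module
`M₁ × ⋯ × Mₙ` is (completely) virtually semisimple iff each `Mᵢ` is a (completely) virtually
semisimple `Rᵢ`-module. -/
theorem stmt_4 (n : ℕ) (R : Fin n → Type u) [∀ i, Ring (R i)]
    (M : Fin n → Type v) [∀ i, AddCommGroup (M i)] [∀ i, Module (R i) (M i)] :
    (IsVirtuallySemisimple (∀ i, R i) (∀ i, M i) ↔
      ∀ i, IsVirtuallySemisimple (R i) (M i)) ∧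
    (IsCompletelyVirtuallySemisimple (∀ i, R i) (∀ i, M i) ↔
      ∀ i, IsCompletelyVirtuallySemisimple (R i) (M i)) := by
  exact ⟨prod_vs, prod_cvs⟩
end

section
/- Let R be a ring and M a nonzero virtually semisimple left R-module. Then M is finitely generated if and only if M is a Noetherian R-module. -/
universe u v w

/-- A nonzero virtually semisimple module is finitely generated iff it is Noetherian. -/
theorem stmt_6 (R : Type u) [Ring R] (M : Type v) [AddCommGroup M] [Module R M]
    [Nontrivial M] (hM : IsVirtuallySemisimple R M) :
    Module.Finite R M ↔ IsNoetherian R M := by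
  constructor
  · intro hfin
    rw [isNoetherian_def]
    intro N
    obtain ⟨K, ⟨K', hcompl⟩, ⟨e⟩⟩ := hM N
    have hK : Module.Finite R K :=
      Module.Finite.of_surjective (K.linearProjOfIsCompl K' hcompl)
        (LinearMap.range_eq_top.mp (Submodule.linearProjOfIsCompl_range hcompl))
    have hN : Module.Finite R N := Module.Finite.equiv e.symm
    exact Module.Finite.iff_fg.mp hN
  · intro h
    exact Module.Finite.of_surjective (LinearMap.id : M →ₗ[R] M) Function.surjective_id
end

section
/- Let R be a ring and M a nonzero virtually semisimple left R-module. Then M is finitely generated if and only if M has finite uniform dimension, i.e., there exist finitely many uniform submodules U₁, …, Uₙ of M that are independent (their sum is an internal direct sum) and whose sum U₁ ⊕ ⋯ ⊕ Uₙ is an essential submodule of M. -/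
universe u v w

/-- A submodule `U` of `M` is *uniform* if `U ≠ 0` and any two nonzero submodules of `U` have
nonzero intersection. -/
def IsUniformSubmodule {R : Type u} [Ring R] {M : Type v} [AddCommGroup M] [Module R M]
    (U : Submodule R M) : Prop :=
  U ≠ ⊥ ∧ ∀ A B : Submodule R M, A ≤ U → B ≤ U → A ≠ ⊥ → B ≠ ⊥ → A ⊓ B ≠ ⊥

/-- A submodule `N` of `M` is *essential* if it meets every nonzero submodule nontrivially. -/
def IsEssentialSubmodule {R : Type u} [Ring R] {M : Type v} [AddCommGroup M] [Module R M]
    (N : Submodule R M) : Prop :=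
  ∀ K : Submodule R M, K ≠ ⊥ → N ⊓ K ≠ ⊥

/-!
If `U₁, …, Uₙ` are independent uniform submodules with essential sum, then `M` contains no
`n + 1` independent nonzero submodules: given independent nonzero `T₁, …, Tₘ`, the sum of all
`Tₗ` but one is not essential, so it misses some `Uᵢ`, which can replace the remaining `Tₗ`;
after `m` exchanges all `Tₗ` are among the `Uᵢ`, so `m ≤ n`.

If `M` is finitely generated, virtual semisimplicity makes every submodule a quotient of `M`, so
`M` is noetherian, and a maximal sum of independent uniform submodules is essential. Conversely,
pick `0 ≠ xᵢ ∈ Uᵢ`; then `N = ∑ R xᵢ` is isomorphic to a direct summand `K` of `M`, and `K`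
contains `n` independent nonzero submodules, so by the above `K` is essential and its
complement is `0`. Hence `M ≅ N` is finitely generated.
-/

open Submodule

section Lattice

variable {ι α : Type*} [CompleteLattice α] [IsModularLattice α] {t : ι → α}

theorem iSupIndep.update [DecidableEq ι] (ht : iSupIndep t) {i : ι} {a : α}
    (ha : Disjoint a (⨆ (j) (_ : j ≠ i), t j)) : iSupIndep (Function.update t i a) := by
  intro j
  rcases eq_or_ne j i with rfl | hji
  · rw [Function.update_self]
    refine ha.mono_right (iSup₂_le fun l hl => ?_)
    rw [Function.update_of_ne hl]
    exact le_iSup₂ (f := fun l (_ : l ≠ j) => t l) l hl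
  · set b := ⨆ (l) (_ : l ≠ j ∧ l ≠ i), t l
    have hjb : Disjoint (t j) b :=
      (ht j).mono_right (iSup₂_le fun l hl => le_iSup₂ (f := fun l (_ : l ≠ j) => t l) l hl.1)
    have hjba : Disjoint (t j ⊔ b) a := by
      refine ha.symm.mono_left (sup_le (le_iSup₂ (f := fun l (_ : l ≠ i) => t l) j hji) ?_)
      exact iSup₂_le fun l hl => le_iSup₂ (f := fun l (_ : l ≠ i) => t l) l hl.2
    rw [Function.update_of_ne hji]
    refine (hjb.disjoint_sup_right_of_disjoint_sup_left hjba).mono_right (iSup₂_le fun l hl => ?_)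
    rcases eq_or_ne l i with rfl | hli
    · rw [Function.update_self]
      exact le_sup_right
    · rw [Function.update_of_ne hli]
      exact le_sup_of_le_left (le_iSup₂ (f := fun l (_ : l ≠ j ∧ l ≠ i) => t l) l ⟨hl, hli⟩)

theorem iSupIndep.option_elim (ht : iSupIndep t) {a : α} (ha : Disjoint a (⨆ i, t i)) :
    iSupIndep fun o : Option ι => o.elim a t := by
  rintro (_ | i)
  · exact ha.mono_right (iSup₂_le fun o ho => by
      obtain ⟨j, rfl⟩ := Option.ne_none_iff_exists'.1 ho
      exact le_iSup t j)
  · have hia : Disjoint (t i ⊔ ⨆ (j) (_ : j ≠ i), t j) a :=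
      ha.symm.mono_left (sup_le (le_iSup t i) (iSup₂_le fun j _ => le_iSup t j))
    refine ((ht i).disjoint_sup_right_of_disjoint_sup_left hia).mono_right (iSup₂_le ?_)
    rintro (_ | j) hj
    · exact le_sup_right
    · exact le_sup_of_le_left (le_iSup₂ (f := fun j (_ : j ≠ i) => t j) j fun h => hj (h ▸ rfl))

end Lattice

section Essential

variable {R : Type*} [Ring R] {M : Type*} [AddCommGroup M] [Module R M]

namespace Submodule

/-- `N` need not lie in `P`: it is `N ⊓ P` that is essential in `P`. -/
def IsEssentialIn (N P : Submodule R M) : Prop :=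
  ∀ K ≤ P, K ≠ ⊥ → N ⊓ K ≠ ⊥

variable {N P Q : Submodule R M}

theorem isEssentialIn_iff :
    N.IsEssentialIn P ↔ ∀ x ∈ P, x ≠ 0 → ∃ r : R, r • x ∈ N ∧ r • x ≠ 0 := by
  constructor
  · intro h x hx hx0
    obtain ⟨y, ⟨hyN, hyx⟩, hy0⟩ := (Submodule.ne_bot_iff _).1 <|
      h (span R {x}) ((span_singleton_le_iff_mem x P).2 hx) (by simpa using hx0)
    obtain ⟨r, rfl⟩ := mem_span_singleton.1 hyx
    exact ⟨r, hyN, hy0⟩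
  · intro h K hKP hK0
    obtain ⟨x, hxK, hx0⟩ := (Submodule.ne_bot_iff _).1 hK0
    obtain ⟨r, hrN, hr0⟩ := h x (hKP hxK) hx0
    exact (Submodule.ne_bot_iff _).2 ⟨r • x, ⟨hrN, K.smul_mem r hxK⟩, hr0⟩

theorem _root_.isEssentialSubmodule_iff_isEssentialIn_top :
    IsEssentialSubmodule N ↔ N.IsEssentialIn ⊤ :=
  ⟨fun h K _ => h K, fun h K => h K le_top⟩

theorem IsEssentialIn.trans (hNP : N.IsEssentialIn P) (hPQ : P.IsEssentialIn Q) :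
    N.IsEssentialIn Q := fun K hKQ hK0 h =>
  hNP (P ⊓ K) inf_le_left (hPQ K hKQ hK0) (by rw [← inf_assoc, inf_right_comm, h, bot_inf_eq])

theorem IsEssentialIn.bot : N.IsEssentialIn ⊥ := fun _ hK hK0 => absurd (le_bot_iff.1 hK) hK0

private theorem IsEssentialIn.exists_smul_mem_smul_add_ne_zero (h : N.IsEssentialIn P)
    (hPQ : Disjoint P Q) {p q : M} (hp : p ∈ P) (hq : q ∈ Q) (hpq : p + q ≠ 0) :
    ∃ r : R, r • p ∈ N ∧ r • (p + q) ≠ 0 := by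
  by_cases hp0 : p = 0
  · exact ⟨1, by simp [hp0], by rwa [one_smul]⟩
  obtain ⟨r, hrN, hr0⟩ := isEssentialIn_iff.1 h p hp hp0
  refine ⟨r, hrN, fun h0 => hr0 (disjoint_def.1 hPQ _ (P.smul_mem r hp) ?_)⟩
  rw [smul_add, add_eq_zero_iff_eq_neg] at h0
  exact h0 ▸ Q.neg_mem (Q.smul_mem r hq)

theorem IsEssentialIn.sup (hP : N.IsEssentialIn P) (hQ : N.IsEssentialIn Q) (hPQ : Disjoint P Q) :
    N.IsEssentialIn (P ⊔ Q) := by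
  refine isEssentialIn_iff.2 fun x hx hx0 => ?_
  obtain ⟨p, hp, q, hq, rfl⟩ := mem_sup.1 hx
  -- first move the `P`-component into `N`, then the `Q`-component of the result
  obtain ⟨r, hrp, hr0⟩ := hP.exists_smul_mem_smul_add_ne_zero hPQ hp hq hx0
  obtain ⟨s, hsq, hs0⟩ := hQ.exists_smul_mem_smul_add_ne_zero hPQ.symm (Q.smul_mem r hq)
    (P.smul_mem r hp) (by rwa [add_comm, ← smul_add])
  refine ⟨s * r, ?_, ?_⟩
  · rw [mul_smul, smul_add, smul_add]
    exact N.add_mem (N.smul_mem s hrp) hsq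
  · rwa [mul_smul, smul_add r p q, add_comm]

theorem _root_.iSupIndep.isEssentialIn_iSup {ι : Type*} {T : ι → Submodule R M}
    (hT : iSupIndep T) (h : ∀ i, N.IsEssentialIn (T i)) : N.IsEssentialIn (⨆ i, T i) := by
  classical
  have hfin (s : Finset ι) : N.IsEssentialIn (⨆ i ∈ s, T i) := by
    induction s using Finset.induction_on with
    | empty => simpa using IsEssentialIn.bot
    | insert a s ha ih =>
      rw [Finset.iSup_insert]
      exact (h a).sup ih (hT.disjoint_biSup ha)
  refine isEssentialIn_iff.2 fun x hx hx0 => ?_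
  obtain ⟨s, hs⟩ := mem_iSup_iff_exists_finset.1 hx
  exact isEssentialIn_iff.1 (hfin s) x hs hx0

end Submodule

theorem IsUniformSubmodule.isEssentialIn {U N : Submodule R M} (hU : IsUniformSubmodule U)
    (hNU : N ⊓ U ≠ ⊥) : N.IsEssentialIn U := fun K hKU hK0 h =>
  hU.2 _ K inf_le_right hKU hNU hK0 (by rw [inf_right_comm, h, bot_inf_eq])

end Essential

section UniformDimension

variable {R : Type*} [Ring R] {M : Type*} [AddCommGroup M] [Module R M]
  {ι : Type*} {U : ι → Submodule R M}

theorem exists_disjoint_of_not_isEssentialSubmodule (hU : ∀ i, IsUniformSubmodule (U i))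
    (hUind : iSupIndep U) (hUess : IsEssentialSubmodule (⨆ i, U i)) {W : Submodule R M}
    (hW : ¬IsEssentialSubmodule W) : ∃ i, Disjoint (U i) W := by
  contrapose! hW
  have hWU : W.IsEssentialIn (⨆ i, U i) := hUind.isEssentialIn_iSup fun i =>
    (hU i).isEssentialIn (by rw [inf_comm]; exact disjoint_iff.not.1 (hW i))
  exact isEssentialSubmodule_iff_isEssentialIn_top.2
    (hWU.trans (isEssentialSubmodule_iff_isEssentialIn_top.1 hUess))

theorem exists_iSupIndep_forall_mem_range (hU : ∀ i, IsUniformSubmodule (U i))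
    (hUind : iSupIndep U) (hUess : IsEssentialSubmodule (⨆ i, U i)) {κ : Type*} [Fintype κ]
    {T : κ → Submodule R M} (hT : iSupIndep T) (hT0 : ∀ j, T j ≠ ⊥) :
    ∃ T' : κ → Submodule R M, iSupIndep T' ∧ (∀ j, T' j ≠ ⊥) ∧ ∀ j, T' j ∈ Set.range U := by
  classical
  -- exchange the members indexed by `s` for members of `U`, one at a time
  suffices h : ∀ s : Finset κ, ∀ T : κ → Submodule R M, iSupIndep T → (∀ j, T j ≠ ⊥) →
      (∀ j ∉ s, T j ∈ Set.range U) →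
      ∃ T' : κ → Submodule R M, iSupIndep T' ∧ (∀ j, T' j ≠ ⊥) ∧ ∀ j, T' j ∈ Set.range U from
    h Finset.univ T hT hT0 fun j hj => absurd (Finset.mem_univ j) hj
  intro s
  induction s using Finset.induction_on with
  | empty => exact fun T hT hT0 hTU => ⟨T, hT, hT0, fun j => hTU j (Finset.notMem_empty j)⟩
  | insert a s _ ih =>
    intro T hT hT0 hTU
    obtain ⟨i, hi⟩ := exists_disjoint_of_not_isEssentialSubmodule hU hUind hUess
      fun hW => hW (T a) (hT0 a) (by rw [inf_comm]; exact (hT a).eq_bot)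
    refine ih _ (hT.update hi) (fun j => ?_) (fun j hj => ?_)
    · rcases eq_or_ne j a with rfl | hja
      · simpa using (hU i).1
      · simpa [hja] using hT0 j
    · rcases eq_or_ne j a with rfl | hja
      · simp
      · simpa [hja] using hTU j (by simp [hja, hj])

theorem card_le_card_of_iSupIndep [Fintype ι] (hU : ∀ i, IsUniformSubmodule (U i))
    (hUind : iSupIndep U) (hUess : IsEssentialSubmodule (⨆ i, U i)) {κ : Type*} [Fintype κ]
    {T : κ → Submodule R M} (hT : iSupIndep T) (hT0 : ∀ j, T j ≠ ⊥) :
    Fintype.card κ ≤ Fintype.card ι := by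
  obtain ⟨T', hT', hT'0, hT'U⟩ := exists_iSupIndep_forall_mem_range hU hUind hUess hT hT0
  choose σ hσ using hT'U
  refine Fintype.card_le_of_injective σ fun j j' h => hT'.injective hT'0 ?_
  rw [← hσ j, ← hσ j', h]

theorem isEssentialSubmodule_iSup_of_card_le [Fintype ι] (hU : ∀ i, IsUniformSubmodule (U i))
    (hUind : iSupIndep U) (hUess : IsEssentialSubmodule (⨆ i, U i)) {κ : Type*} [Fintype κ]
    {T : κ → Submodule R M} (hT : iSupIndep T) (hT0 : ∀ j, T j ≠ ⊥)
    (hcard : Fintype.card ι ≤ Fintype.card κ) : IsEssentialSubmodule (⨆ j, T j) := by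
  intro X hX0 hTX
  have hX : Disjoint X (⨆ j, T j) := by rw [disjoint_iff, inf_comm]; exact hTX
  have := card_le_card_of_iSupIndep hU hUind hUess (hT.option_elim hX)
    (by rintro (_ | j); exacts [hX0, hT0 j])
  rw [Fintype.card_option] at this
  omega

end UniformDimension

section Noetherian

variable {R : Type*} [Ring R] {M : Type*} [AddCommGroup M] [Module R M] [IsNoetherian R M]

theorem exists_isUniformSubmodule_le {N : Submodule R M} (hN : N ≠ ⊥) :
    ∃ U ≤ N, IsUniformSubmodule U := by
  obtain ⟨K, ⟨V, hVN, hV0, hVK⟩, hmax⟩ := set_has_maximal_iff_noetherian.2 ‹_›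
    {K | ∃ V ≤ N, V ≠ ⊥ ∧ Disjoint V K} ⟨⊥, N, le_rfl, hN, disjoint_bot_right⟩
  -- if `A, B ≤ V` were disjoint, then `K ⊔ A` would contradict the maximality of `K`
  refine ⟨V, hVN, hV0, fun A B hA hB hA0 hB0 hAB => hmax (K ⊔ A) ⟨B, hB.trans hVN, hB0, ?_⟩ ?_⟩
  · have hVKA : V ⊓ (K ⊔ A) = A := by
      rw [sup_comm, inf_comm, sup_inf_assoc_of_le K hA, inf_comm, hVK.eq_bot, sup_bot_eq]
    rw [disjoint_iff, ← inf_eq_left.2 hB, inf_assoc, hVKA, inf_comm, hAB]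
  · exact left_lt_sup.2 fun hAK => hA0 (disjoint_self.1 ((hVK.mono_left hA).mono_right hAK))

theorem exists_isUniformSubmodule_iSupIndep_isEssentialSubmodule :
    ∃ (n : ℕ) (U : Fin n → Submodule R M), (∀ i, IsUniformSubmodule (U i)) ∧
      iSupIndep U ∧ IsEssentialSubmodule (⨆ i, U i) := by
  obtain ⟨_, ⟨n, U, hU, hUind, rfl⟩, hmax⟩ := set_has_maximal_iff_noetherian.2 ‹_›
    {C | ∃ (n : ℕ) (U : Fin n → Submodule R M), (∀ i, IsUniformSubmodule (U i)) ∧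
      iSupIndep U ∧ C = ⨆ i, U i}
    ⟨⊥, 0, finZeroElim, finZeroElim, iSupIndep_subsingleton _, by simp⟩
  refine ⟨n, U, hU, hUind, fun K hK0 hUK => ?_⟩
  obtain ⟨V, hVK, hV⟩ := exists_isUniformSubmodule_le hK0
  have hVU : Disjoint V (⨆ i, U i) := by
    rw [disjoint_iff, inf_comm]; exact eq_bot_mono (inf_le_inf_left _ hVK) hUK
  refine hmax _ ⟨n + 1, fun j => (finSuccEquiv n j).elim V U, fun j => ?_,
    (hUind.option_elim hVU).comp (finSuccEquiv n).injective, rfl⟩ ?_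
  · dsimp only
    rcases finSuccEquiv n j with _ | i
    exacts [hV, hU i]
  · rw [(finSuccEquiv n).iSup_comp (g := fun o => o.elim V U), iSup_option_elim]
    exact right_lt_sup.2 fun hVU' => hV.1 (disjoint_self.1 (hVU.mono_right hVU'))

end Noetherian

section VirtuallySemisimple

variable {R : Type*} [Ring R] {M : Type*} [AddCommGroup M] [Module R M]

theorem iSupIndep.comap_of_injective {N : Type*} [AddCommGroup N] [Module R N] {ι : Type*}
    {t : ι → Submodule R M} (ht : iSupIndep t) {f : N →ₗ[R] M} (hf : Function.Injective f) :
    iSupIndep fun i => (t i).comap f := by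
  intro i
  have : Disjoint ((t i).comap f) ((⨆ (j) (_ : j ≠ i), t j).comap f) := by
    rw [disjoint_iff, ← comap_inf, (ht i).eq_bot, comap_bot, LinearMap.ker_eq_bot.2 hf]
  exact this.mono_right <|
    iSup₂_le fun j hj => comap_mono (le_iSup₂ (f := fun j (_ : j ≠ i) => t j) j hj)

theorem IsVirtuallySemisimple.isNoetherian [Module.Finite R M] (hM : IsVirtuallySemisimple R M) :
    IsNoetherian R M := by
  refine ⟨fun N => ?_⟩
  obtain ⟨K, ⟨K', hKK'⟩, ⟨e⟩⟩ := hM N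
  have : Module.Finite R K := Module.Finite.equiv (quotientEquivOfIsCompl K' K hKK'.symm)
  exact Module.Finite.iff_fg.1 (Module.Finite.equiv e.symm)

theorem IsVirtuallySemisimple.finite {ι : Type*} [Fintype ι] {U : ι → Submodule R M}
    (hM : IsVirtuallySemisimple R M) (hU : ∀ i, IsUniformSubmodule (U i)) (hUind : iSupIndep U)
    (hUess : IsEssentialSubmodule (⨆ i, U i)) : Module.Finite R M := by
  choose x hxU hx0 using fun i => (Submodule.ne_bot_iff _).1 (hU i).1
  set N := span R (Set.range x)
  obtain ⟨K, ⟨K', hKK'⟩, ⟨e⟩⟩ := hM N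
  set f : N →ₗ[R] M := K.subtype ∘ₗ e.toLinearMap
  have hf : Function.Injective f := K.injective_subtype.comp e.injective
  set T := fun i => ((U i).comap N.subtype).map f
  have hT0 (i : ι) : T i ≠ ⊥ := (Submodule.ne_bot_iff _).2 ⟨f ⟨x i, subset_span ⟨i, rfl⟩⟩,
    mem_map_of_mem (hxU i), fun h => hx0 i (congrArg Subtype.val (hf (h.trans f.map_zero.symm)))⟩
  have hTK : ⨆ i, T i ≤ K := iSup_le fun i => map_le_iff_le_comap.2 fun y _ => (e y).2
  have hTess := isEssentialSubmodule_iSup_of_card_le hU hUind hUess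
    (f.iSupIndep_map hf (hUind.comap_of_injective N.injective_subtype)) hT0 le_rfl
  have hK' : K' = ⊥ := by
    by_contra hK'
    exact hTess K' hK' (eq_bot_mono (inf_le_inf_right K' hTK) hKK'.inf_eq_bot)
  have hK : K = ⊤ := by simpa [hK'] using hKK'.sup_eq_top
  have : Module.Finite R N := Module.Finite.span_of_finite R (Set.finite_range x)
  exact Module.Finite.equiv (e.trans (LinearEquiv.ofTop K hK))

end VirtuallySemisimple

theorem stmt_7_general (R : Type u) [Ring R] (M : Type v) [AddCommGroup M] [Module R M]
    (hM : IsVirtuallySemisimple R M) :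
    Module.Finite R M ↔
      ∃ (n : ℕ) (U : Fin n → Submodule R M), (∀ i, IsUniformSubmodule (U i)) ∧
        iSupIndep U ∧ IsEssentialSubmodule (⨆ i, U i) := by
  refine ⟨fun _ => ?_, fun ⟨_, _, hU, hUind, hUess⟩ => hM.finite hU hUind hUess⟩
  have := hM.isNoetherian
  exact exists_isUniformSubmodule_iSupIndep_isEssentialSubmodule

/-- A nonzero virtually semisimple module is finitely generated iff it has finite uniform
dimension, i.e. there are finitely many independent uniform submodules whose direct sum is
essential in `M`. -/
theorem stmt_7 (R : Type u) [Ring R] (M : Type v) [AddCommGroup M] [Module R M]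
    [Nontrivial M] (hM : IsVirtuallySemisimple R M) :
    Module.Finite R M ↔
      ∃ (n : ℕ) (U : Fin n → Submodule R M), (∀ i, IsUniformSubmodule (U i)) ∧
        iSupIndep U ∧ IsEssentialSubmodule (⨆ i, U i) :=
  stmt_7_general R M hM
end

section
/- Let R be a ring and M a nonzero finitely generated left R-module. Then M is virtually semisimple if and only if M is isomorphic, as an R-module, to every essential submodule of M (that is, N ≅ M for all essential submodules N of M). -/
universe u v w

section Aux

variable {R : Type u} [Ring R] {M : Type v} [AddCommGroup M] [Module R M]

/-- Key fact: if `U, V ≤ K`, `W ≤ K'` with `K, K'` disjoint and `U, V` disjoint, then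
`U` is disjoint from `V ⊔ W`. -/
theorem aux_disjoint_sup {K K' U V W : Submodule R M} (hKK' : Disjoint K K')
    (hU : U ≤ K) (hV : V ≤ K) (hW : W ≤ K') (hUV : Disjoint U V) : Disjoint U (V ⊔ W) := by
  rw [Submodule.disjoint_def]
  intro u huU huVW
  obtain ⟨v, hv, w, hw, rfl⟩ := Submodule.mem_sup.mp huVW
  have hwK : w ∈ K := by
    have : (v + w) - v ∈ K := K.sub_mem (hU huU) (hV hv)
    simpa using this
  have hw0 : w = 0 := Submodule.disjoint_def.mp hKK' w hwK (hW hw)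
  subst hw0
  have hv0 : v + 0 = 0 := Submodule.disjoint_def.mp hUV _ huU (by simpa using hv)
  simpa using hv0

/-- Every submodule has a maximal disjoint partner, and their sup is essential. -/
theorem aux_exists_essential_compl (N : Submodule R M) :
    ∃ C : Submodule R M, Disjoint N C ∧ IsEssentialSubmodule (N ⊔ C) := by
  obtain ⟨C, hC⟩ := zorn_le₀ {C : Submodule R M | Disjoint N C} (fun c hcs hc => by
    rcases c.eq_empty_or_nonempty with rfl | hne
    · exact ⟨⊥, disjoint_bot_right, by simp⟩
    · refine ⟨sSup c, ?_, fun z hz => le_sSup hz⟩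
      simp only [Set.mem_setOf_eq]
      rw [Submodule.disjoint_def]
      intro x hxN hxS
      obtain ⟨p, hp, hxp⟩ := (Submodule.mem_sSup_of_directed hne hc.directedOn).mp hxS
      exact Submodule.disjoint_def.mp (hcs hp) x hxN hxp)
  refine ⟨C, hC.prop, fun X hX hbot => hX ?_⟩
  -- suppose (N ⊔ C) ⊓ X = ⊥ ; show X = ⊥
  have hdisj : Disjoint N (C ⊔ X) := by
    rw [Submodule.disjoint_def]
    intro n hnN hnCX
    obtain ⟨cc, hcc, x, hx, rfl⟩ := Submodule.mem_sup.mp hnCX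
    have hxNC : x ∈ (N ⊔ C) ⊓ X := by
      refine ⟨?_, hx⟩
      have : (cc + x) - cc ∈ N ⊔ C :=
        Submodule.sub_mem _ (Submodule.mem_sup_left hnN) (Submodule.mem_sup_right hcc)
      simpa using this
    rw [hbot] at hxNC
    simp only [Submodule.mem_bot] at hxNC
    subst hxNC
    have hcc0 : cc = 0 :=
      Submodule.disjoint_def.mp hC.prop cc (by simpa using hnN) hcc
    simp [hcc0]
  have hle : C ⊔ X ≤ C := hC.le_of_ge hdisj le_sup_left
  have hXC : X ≤ C := le_trans le_sup_right hle
  -- then X ≤ (N ⊔ C) ⊓ X = ⊥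
  have : X ≤ (N ⊔ C) ⊓ X := le_inf (le_trans hXC le_sup_right) le_rfl
  rw [hbot] at this
  exact le_bot_iff.mp this

end Aux

/-- A nonzero finitely generated module is virtually semisimple iff it is isomorphic to each
of its essential submodules. -/
theorem stmt_8 (R : Type u) [Ring R] (M : Type v) [AddCommGroup M] [Module R M]
    [Nontrivial M] [Module.Finite R M] :
    IsVirtuallySemisimple R M ↔
      ∀ N : Submodule R M, IsEssentialSubmodule N → Nonempty (N ≃ₗ[R] M) := by
  constructor
  · intro hVS N hN
    -- M is Noetherian: every submodule is isomorphic to a direct summand, hence f.g.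
    have noeth : IsNoetherian R M := by
      rw [isNoetherian_def]
      intro S
      obtain ⟨K, ⟨K', hKc⟩, ⟨e⟩⟩ := hVS S
      have h1 : Module.Finite R (M ⧸ K') := inferInstance
      have h2 : Module.Finite R K :=
        Module.Finite.equiv (Submodule.quotientEquivOfIsCompl K' K hKc.symm)
      have h3 : Module.Finite R S := Module.Finite.equiv e.symm
      exact Module.Finite.iff_fg.mp h3
    obtain ⟨K, ⟨K', hKc⟩, ⟨φ⟩⟩ := hVS N
    have hK' : K' = ⊥ := by
      by_contra hne
      -- f : N →ₗ M is the embedding with image inside K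
      set f : N →ₗ[R] M := K.subtype ∘ₗ (φ : N →ₗ[R] K) with hf_def
      have hf : Function.Injective f := by
        simp only [hf_def, LinearMap.coe_comp]
        exact K.injective_subtype.comp φ.injective
      have hfK : ∀ A : Submodule R N, Submodule.map f A ≤ K := by
        intro A x hx
        obtain ⟨y, _, rfl⟩ := hx
        exact (φ y).2
      set g : Submodule R M → Submodule R M :=
        fun A => Submodule.map f (A.comap N.subtype) with hg_def
      have hg_le : ∀ A, g A ≤ K := fun A => hfK _
      have hg_mono : Monotone g := fun A B h =>
        Submodule.map_mono (Submodule.comap_mono h)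
      have hg_ne : ∀ A, A ≠ ⊥ → g A ≠ ⊥ := by
        intro A hA hgA
        have hcomap : A.comap N.subtype = ⊥ := by
          rw [eq_bot_iff]
          intro x hx
          have hmem : f x ∈ g A := Submodule.mem_map_of_mem hx
          rw [hgA] at hmem
          have hx0 : x = 0 := hf (by simpa using hmem)
          simp [hx0]
        have : N ⊓ A = ⊥ := by
          rw [← Submodule.map_comap_subtype, hcomap, Submodule.map_bot]
        exact hN A hA this
      have hg_disj : ∀ A B : Submodule R M, Disjoint A B → Disjoint (g A) (g B) := by
        intro A B h
        rw [disjoint_iff] at h ⊢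
        rw [hg_def]
        simp only
        rw [← Submodule.map_inf _ hf, ← Submodule.comap_inf, h]
        simp [Submodule.ker_subtype]
      set B : ℕ → Submodule R M := fun n => g^[n] (N ⊓ K') with hB_def
      have hB0 : B 0 = N ⊓ K' := rfl
      have hBsucc : ∀ n, B (n + 1) = g (B n) := by
        intro n
        simp only [hB_def, Function.iterate_succ_apply']
      have hB_ne : ∀ n, B n ≠ ⊥ := by
        intro n
        induction n with
        | zero => exact hN K' hne
        | succ k ih => rw [hBsucc]; exact hg_ne _ ih
      have hB0_le : B 0 ≤ K' := inf_le_right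
      have hBsucc_le : ∀ n, B (n + 1) ≤ K := fun n => by rw [hBsucc]; exact hg_le _
      set S : ℕ →o Submodule R M := partialSups B with hS_def
      have hS0 : S 0 = B 0 := partialSups_zero B
      have hSsucc : ∀ n, S (n + 1) = S n ⊔ B (n + 1) := fun n => partialSups_succ B n
      have hBS : ∀ n, B n ≤ S n := fun n => le_partialSups_of_le B le_rfl
      -- claim2 : S (n+1) ≤ B 0 ⊔ g (S n)
      have claim2 : ∀ n, S (n + 1) ≤ B 0 ⊔ g (S n) := by
        intro n
        induction n with
        | zero =>
          rw [hSsucc, hS0, hBsucc]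
        | succ k ih =>
          rw [hSsucc (k + 1)]
          refine sup_le (le_trans ih ?_) ?_
          · exact sup_le_sup_left (hg_mono (S.monotone (Nat.le_succ k))) _
          · rw [hBsucc (k + 1)]
            exact le_trans (hg_mono (hBS (k + 1))) le_sup_right
      -- D : Disjoint (B (n+1)) (S n)
      have hD : ∀ n, Disjoint (B (n + 1)) (S n) := by
        intro n
        induction n with
        | zero =>
          rw [hS0]
          exact Disjoint.mono (hBsucc_le 0) hB0_le hKc.disjoint
        | succ k ih =>
          have h1 : Disjoint (g (B (k + 1))) (g (S k)) := hg_disj _ _ ih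
          have h2 : Disjoint (B (k + 2)) (g (S k) ⊔ B 0) := by
            rw [hBsucc (k + 1)]
            exact aux_disjoint_sup hKc.disjoint (hg_le _) (hg_le _) hB0_le h1
          refine Disjoint.mono_right ?_ h2
          exact le_trans (claim2 k) (by rw [sup_comm])
      -- strictly increasing chain contradicts Noetherian
      obtain ⟨n, hn⟩ := monotone_stabilizes_iff_noetherian.mpr noeth S
      have heq : S n = S (n + 1) := hn (n + 1) (Nat.le_succ n)
      have hle : B (n + 1) ≤ S n := by
        rw [heq, hSsucc]; exact le_sup_right
      exact hB_ne (n + 1) ((hD n).eq_bot_of_le hle)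
    have hKtop : K = ⊤ := by
      have h := hKc.codisjoint
      rw [hK'] at h
      exact codisjoint_bot.mp h
    exact ⟨(φ.trans (LinearEquiv.ofEq K ⊤ hKtop)).trans Submodule.topEquiv⟩
  · intro h N
    obtain ⟨C, hdisj, hess⟩ := aux_exists_essential_compl N
    obtain ⟨θ⟩ := h (N ⊔ C) hess
    set T : Submodule R M := N ⊔ C with hT_def
    set N' : Submodule R T := N.comap T.subtype with hN'_def
    set C' : Submodule R T := C.comap T.subtype with hC'_def
    have hcompl : IsCompl N' C' := by
      constructor
      · rw [Submodule.disjoint_def]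
        intro x hxN hxC
        have : (x : M) = 0 := Submodule.disjoint_def.mp hdisj _ hxN hxC
        exact Subtype.ext this
      · rw [codisjoint_iff_le_sup]
        intro x _
        obtain ⟨n, hn, c, hc, hnc⟩ := Submodule.mem_sup.mp x.2
        refine Submodule.mem_sup.mpr ⟨⟨n, Submodule.mem_sup_left hn⟩, hn,
          ⟨c, Submodule.mem_sup_right hc⟩, hc, ?_⟩
        exact Subtype.ext (by simpa using hnc)
    refine ⟨Submodule.map (θ : T →ₗ[R] M) N',
      ⟨Submodule.map (θ : T →ₗ[R] M) C', ?_⟩, ⟨?_⟩⟩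
    · have := (Submodule.orderIsoMapComap θ).isCompl hcompl
      simpa [Submodule.orderIsoMapComap] using this
    · exact (Submodule.comapSubtypeEquivOfLe (le_sup_left : N ≤ T)).symm.trans
        (θ.submoduleMap N')
end

section
/- A ring R is left virtually semisimple if and only if every free left R-module is virtually semisimple. -/
universe u v w

/-!
Well-order the basis `ι` of a free module `ι →₀ R`. For a submodule `N`, let `I α ⊆ R` be the
left ideal of `α`-th coordinates of those elements of `N` supported in `(-∞, α]`. Each `I α` is a
submodule of `R`, hence isomorphic to a direct summand `K α` of `R`, hence projective; so the
coordinate map onto `I α` has a section, and transfinite induction on the largest support index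
shows that these sections assemble to an isomorphism `⨁ α, I α ≃ N`. Thus
`N ≃ ⨁ α, K α`, which is a direct summand of `⨁ α, R = ι →₀ R` with complement `⨁ α, K' α`.
-/

noncomputable section

open Finsupp

variable {R : Type u} {M : Type v} {ι : Type w} [Ring R] [AddCommGroup M] [Module R M]

theorem Module.Projective.of_isCompl [Module.Projective R M] {K K' : Submodule R M}
    (h : IsCompl K K') : Module.Projective R K :=
  .of_split K.subtype (K.projectionOnto K' h) (by ext; simp)

theorem IsVirtuallySemisimple.of_linearEquiv {M' : Type w} [AddCommGroup M'] [Module R M']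
    (e : M ≃ₗ[R] M') (h : IsVirtuallySemisimple R M) : IsVirtuallySemisimple R M' := by
  intro N
  obtain ⟨K, ⟨K', hKK'⟩, ⟨g⟩⟩ := h (N.map (e.symm : M' →ₗ[R] M))
  exact ⟨K.map (e : M →ₗ[R] M'), ⟨K'.map (e : M →ₗ[R] M'),
    (Submodule.orderIsoMapComap e).isCompl hKK'⟩,
    ⟨(e.symm.submoduleMap N).trans (g.trans (e.submoduleMap K))⟩⟩

namespace Finsupp

variable [DecidableEq ι]

def ofDFinsuppSubmodules (K : ι → Submodule R M) : (Π₀ i, K i) →ₗ[R] ι →₀ M :=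
  DFinsupp.lsum ℕ fun i => lsingle i ∘ₗ (K i).subtype

@[simp]
theorem ofDFinsuppSubmodules_single (K : ι → Submodule R M) (i : ι) (m : K i) :
    ofDFinsuppSubmodules K (DFinsupp.single i m) = single i (m : M) := by
  simp [ofDFinsuppSubmodules]

@[simp]
theorem ofDFinsuppSubmodules_apply (K : ι → Submodule R M) (f : Π₀ i, K i) (i : ι) :
    ofDFinsuppSubmodules K f i = f i := by
  induction f using DFinsupp.induction with
  | h0 => simp
  | ha j m f _ _ ih =>
    rcases eq_or_ne j i with rfl | hne
    · simp [ih]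
    · simp [ih, hne, DFinsupp.single_eq_of_ne hne.symm]

theorem ofDFinsuppSubmodules_injective (K : ι → Submodule R M) :
    Function.Injective (ofDFinsuppSubmodules K) := fun f g hfg =>
  DFinsupp.ext fun i => Subtype.ext <| by simpa using DFunLike.congr_fun hfg i

theorem isCompl_range_ofDFinsuppSubmodules {K K' : ι → Submodule R M}
    (h : ∀ i, IsCompl (K i) (K' i)) :
    IsCompl (LinearMap.range (ofDFinsuppSubmodules K))
      (LinearMap.range (ofDFinsuppSubmodules K')) := by
  constructor
  · rw [Submodule.disjoint_def]
    rintro _ ⟨f, rfl⟩ ⟨g, hg⟩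
    ext i
    have hfi : (f i : M) ∈ K' i := by
      have hgi := DFunLike.congr_fun hg i
      rw [ofDFinsuppSubmodules_apply, ofDFinsuppSubmodules_apply] at hgi
      exact hgi ▸ (g i).2
    simpa using Submodule.disjoint_def.1 (h i).disjoint _ (f i).2 hfi
  · rw [codisjoint_iff, eq_top_iff, ← iSup_lsingle_range, iSup_le_iff]
    rintro i _ ⟨m, rfl⟩
    obtain ⟨k, hk, k', hk', rfl⟩ :=
      Submodule.mem_sup.1 ((h i).sup_eq_top ▸ Submodule.mem_top (x := m))
    rw [lsingle_apply, single_add]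
    exact Submodule.add_mem_sup ⟨DFinsupp.single i ⟨k, hk⟩, by simp⟩
      ⟨DFinsupp.single i ⟨k', hk'⟩, by simp⟩

end Finsupp

namespace Submodule

variable [LinearOrder ι] (N : Submodule R (ι →₀ M))

def filtration (α : ι) : Submodule R (ι →₀ M) :=
  N ⊓ supported M R (Set.Iic α)

def leadingCoeffs (α : ι) : Submodule R M :=
  (N.filtration α).map (lapply α)

variable {N} in
theorem apply_eq_zero_of_mem_filtration {α j : ι} {x : ι →₀ M} (hx : x ∈ N.filtration α)
    (hj : α < j) : x j = 0 :=
  (mem_supported' R x).1 hx.2 j hj.not_ge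

theorem exists_leadingCoeffs_lift [∀ α, Module.Projective R (N.leadingCoeffs α)] :
    ∃ σ : ∀ α, N.leadingCoeffs α →ₗ[R] N.filtration α,
      ∀ α z, (σ α z : ι →₀ M) α = z := by
  have : ∀ α, ∃ s : N.leadingCoeffs α →ₗ[R] N.filtration α,
      (lapply α).submoduleMap (N.filtration α) ∘ₗ s = LinearMap.id := fun α =>
    LinearMap.exists_rightInverse_of_surjective _
      (LinearMap.range_eq_top.2 (LinearMap.submoduleMap_surjective _ _))
  choose σ hσ using this
  exact ⟨σ, fun α z => congr_arg Subtype.val (LinearMap.congr_fun (hσ α) z)⟩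

variable {N} (σ : ∀ α, N.leadingCoeffs α →ₗ[R] N.filtration α)

def sumLifts : (Π₀ α, N.leadingCoeffs α) →ₗ[R] ι →₀ M :=
  DFinsupp.lsum ℕ fun α => (N.filtration α).subtype ∘ₗ σ α

@[simp]
theorem sumLifts_single (α : ι) (z : N.leadingCoeffs α) :
    sumLifts σ (DFinsupp.single α z) = σ α z := by
  simp [sumLifts]

variable {σ} (hσ : ∀ α z, (σ α z : ι →₀ M) α = z)
include hσ

theorem sumLifts_apply_of_forall_lt (f : Π₀ α, N.leadingCoeffs α) (j : ι)
    (hf : ∀ α, j < α → f α = 0) : sumLifts σ f j = f j := by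
  induction f using DFinsupp.induction with
  | h0 => simp
  | ha α z f hfα hz ih =>
    have hαj : α ≤ j := not_lt.1 fun hjα => hz <| by simpa [hfα] using hf α hjα
    have hf' : ∀ β, j < β → f β = 0 := fun β hjβ => by
      simpa [DFinsupp.single_eq_of_ne (hαj.trans_lt hjβ).ne'] using hf β hjβ
    rw [map_add, Finsupp.add_apply, DFinsupp.add_apply, ih hf', sumLifts_single, coe_add]
    rcases hαj.eq_or_lt with rfl | hαj
    · simp [hσ, hfα]
    · simp [apply_eq_zero_of_mem_filtration (σ α z).2 hαj, DFinsupp.single_eq_of_ne hαj.ne']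

theorem sumLifts_injective : Function.Injective (sumLifts σ) := by
  classical
  rw [← LinearMap.ker_eq_bot, eq_bot_iff]
  intro f hf
  by_contra hne
  have hsupp : f.support.Nonempty := Finset.nonempty_iff_ne_empty.2 fun h =>
    hne (DFinsupp.support_eq_empty.1 h)
  set j := f.support.max' hsupp
  have hlead := sumLifts_apply_of_forall_lt hσ f j fun α hjα => by
    by_contra hα
    exact hjα.not_ge (f.support.le_max' α (DFinsupp.mem_support_iff.2 hα))
  rw [LinearMap.mem_ker.1 hf, Finsupp.zero_apply, eq_comm, ZeroMemClass.coe_eq_zero] at hlead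
  exact DFinsupp.mem_support_iff.1 (f.support.max'_mem hsupp) hlead

theorem range_sumLifts [WellFoundedLT ι] : LinearMap.range (sumLifts σ) = N := by
  refine le_antisymm ?_ fun x hx => ?_
  · rintro _ ⟨f, rfl⟩
    induction f using DFinsupp.induction with
    | h0 => simp
    | ha α z f _ _ ih => simpa using N.add_mem (σ α z).2.1 ih
  · induction hm : x.support.max using WellFoundedLT.induction generalizing x with
    | ind m ih =>
    cases m with
    | bot =>
      rw [Finset.max_eq_bot, support_eq_empty] at hm
      simp [hm]
    | coe α =>
      have hxα : x ∈ N.filtration α :=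
        ⟨hx, (mem_supported R x).2 fun j hj => Finset.le_max_of_eq hj hm⟩
      let z : N.leadingCoeffs α := ⟨x α, x, hxα, rfl⟩
      have hxz : x - σ α z ∈ LinearMap.range (sumLifts σ) := by
        refine ih _ ?_ _ (N.sub_mem hx (σ α z).2.1) rfl
        have hle : x - σ α z ∈ N.filtration α := sub_mem hxα (σ α z).2
        refine (Finset.sup_lt_iff (WithBot.bot_lt_coe α)).2 fun j hj => WithBot.coe_lt_coe.2 ?_
        refine lt_of_le_of_ne ((mem_supported R _).1 hle.2 hj) ?_
        rintro rfl
        simp [hσ, z] at hj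
      simpa using add_mem hxz ⟨DFinsupp.single α z, sumLifts_single σ α z⟩

end Submodule

theorem Submodule.nonempty_linearEquiv_dfinsupp_leadingCoeffs [LinearOrder ι] [WellFoundedLT ι]
    (N : Submodule R (ι →₀ M)) [∀ α, Module.Projective R (N.leadingCoeffs α)] :
    Nonempty (N ≃ₗ[R] Π₀ α, N.leadingCoeffs α) := by
  obtain ⟨σ, hσ⟩ := N.exists_leadingCoeffs_lift
  exact ⟨(LinearEquiv.ofEq _ _ (range_sumLifts hσ).symm).trans
    (LinearEquiv.ofInjective _ (sumLifts_injective hσ)).symm⟩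

theorem IsVirtuallySemisimple.finsupp (hR : IsVirtuallySemisimple R R) (ι : Type w) :
    IsVirtuallySemisimple R (ι →₀ R) := by
  obtain ⟨_, _⟩ := exists_wellFoundedLT (α := ι)
  intro N
  choose K hK e using fun α => hR (N.leadingCoeffs α)
  choose K' hKK' using hK
  have : ∀ α, Module.Projective R (N.leadingCoeffs α) := fun α =>
    haveI := Module.Projective.of_isCompl (hKK' α)
    .of_equiv (e α).some.symm
  obtain ⟨eN⟩ := N.nonempty_linearEquiv_dfinsupp_leadingCoeffs
  exact ⟨_, ⟨_, isCompl_range_ofDFinsuppSubmodules hKK'⟩,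
    ⟨eN ≪≫ₗ DFinsupp.mapRange.linearEquiv (fun α => (e α).some) ≪≫ₗ
      LinearEquiv.ofInjective _ (ofDFinsuppSubmodules_injective K)⟩⟩

end

/-- A ring `R` is left virtually semisimple iff every free left `R`-module is virtually
semisimple. -/
theorem stmt_10 (R : Type u) [Ring R] :
    IsVirtuallySemisimple R R ↔
      ∀ (M : Type (max u v)) [AddCommGroup M] [Module R M], Module.Free R M →
        IsVirtuallySemisimple R M := by
  refine ⟨fun hR M _ _ _ => ?_, fun h => ?_⟩
  · exact (hR.finsupp _).of_linearEquiv (Module.Free.chooseBasis R M).repr.symm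
  · exact (h (ULift.{v} R) inferInstance).of_linearEquiv ULift.moduleEquiv
end

section
/- Let R and S be Morita equivalent rings (i.e., the categories of left R-modules and left S-modules are equivalent). Then R is left completely virtually semisimple if and only if S is left completely virtually semisimple. -/
/-!
For submodules `Q ≤ N ≤ M`, complete virtual semisimplicity of `M` says exactly that `Q` is a
retract of `N`. In this form it is a property of objects of a module category that is inherited by
subobjects and transported by equivalences.

If `R` is left completely virtually semisimple, its left ideals are retracts of `R`, hence
projective. A submodule of `N × R` therefore splits as its kernel part times its image in `R`, and
the property passes from `N` to `N × R`, hence to every `Rⁿ`. An equivalence `F` sends `R` to a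
generator of the `S`-modules, so `S` is a direct summand of some `F(R)ⁿ ≅ F(Rⁿ)` and inherits the
property.
-/

universe u v w

open LinearMap

section Retract

variable (R : Type*) [Ring R]

def IsLinearRetract (A B : Type*) [AddCommGroup A] [Module R A] [AddCommGroup B] [Module R B] :
    Prop :=
  ∃ (i : A →ₗ[R] B) (r : B →ₗ[R] A), r ∘ₗ i = LinearMap.id

variable {R} {A B A' B' : Type*} [AddCommGroup A] [Module R A] [AddCommGroup B] [Module R B]
  [AddCommGroup A'] [Module R A'] [AddCommGroup B'] [Module R B']

theorem IsLinearRetract.of_linearEquiv (h : IsLinearRetract R A B) (eA : A ≃ₗ[R] A')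
    (eB : B ≃ₗ[R] B') : IsLinearRetract R A' B' := by
  obtain ⟨i, r, hri⟩ := h
  refine ⟨eB.toLinearMap ∘ₗ i ∘ₗ eA.symm.toLinearMap, eA.toLinearMap ∘ₗ r ∘ₗ eB.symm.toLinearMap,
    LinearMap.ext fun x => ?_⟩
  simpa using congrArg eA (LinearMap.congr_fun hri (eA.symm x))

theorem IsLinearRetract.prodMap (h : IsLinearRetract R A B) (h' : IsLinearRetract R A' B') :
    IsLinearRetract R (A × A') (B × B') := by
  obtain ⟨i, r, hri⟩ := h
  obtain ⟨i', r', hri'⟩ := h'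
  refine ⟨i.prodMap i', r.prodMap r', ?_⟩
  rw [LinearMap.prodMap_comp, hri, hri', LinearMap.prodMap_id]

theorem IsLinearRetract.projective [Module.Projective R B] (h : IsLinearRetract R A B) :
    Module.Projective R A :=
  let ⟨i, r, hri⟩ := h
  Module.Projective.of_split i r hri

theorem isLinearRetract_iff_exists_isCompl :
    IsLinearRetract R A B ↔
      ∃ K : Submodule R B, (∃ K' : Submodule R B, IsCompl K K') ∧ Nonempty (A ≃ₗ[R] K) := by
  constructor
  · rintro ⟨i, r, hri⟩
    have hri' : Function.LeftInverse r i := LinearMap.congr_fun hri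
    have hidem : IsIdempotentElem (i ∘ₗ r) := by
      rw [IsIdempotentElem, Module.End.mul_eq_comp, LinearMap.comp_assoc,
        ← LinearMap.comp_assoc r, hri, LinearMap.id_comp]
    refine ⟨range (i ∘ₗ r), ⟨_, hidem.isCompl⟩, ⟨(LinearEquiv.ofInjective i hri'.injective).trans
      (LinearEquiv.ofEq _ _ (range_comp_of_range_eq_top i (range_eq_top.2 hri'.surjective)).symm)⟩⟩
  · rintro ⟨K, ⟨K', hK⟩, ⟨e⟩⟩
    refine ⟨K.subtype ∘ₗ e.toLinearMap, e.symm.toLinearMap ∘ₗ K.projectionOnto K' hK, ?_⟩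
    ext a
    simp [Submodule.projectionOnto_apply_left]

end Retract

section CompletelyVirtuallySemisimple

variable {R : Type*} [Ring R] {M M' A B : Type*} [AddCommGroup M] [Module R M]
  [AddCommGroup M'] [Module R M'] [AddCommGroup A] [Module R A] [AddCommGroup B] [Module R B]

theorem isVirtuallySemisimple_iff_isLinearRetract :
    IsVirtuallySemisimple R M ↔ ∀ N : Submodule R M, IsLinearRetract R N M :=
  forall_congr' fun _ => isLinearRetract_iff_exists_isCompl.symm

theorem isCompletelyVirtuallySemisimple_iff_isLinearRetract :
    IsCompletelyVirtuallySemisimple R M ↔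
      ∀ N Q : Submodule R M, Q ≤ N → IsLinearRetract R Q N := by
  refine forall_congr' fun N => isVirtuallySemisimple_iff_isLinearRetract.trans ⟨?_, ?_⟩
  · intro h Q hQN
    exact (h (Q.comap N.subtype)).of_linearEquiv (Submodule.comapSubtypeEquivOfLe hQN)
      (LinearEquiv.refl R N)
  · intro h Q
    exact (h _ (Submodule.map_subtype_le N Q)).of_linearEquiv
      (Submodule.equivMapOfInjective N.subtype N.injective_subtype Q).symm (LinearEquiv.refl R N)

theorem IsCompletelyVirtuallySemisimple.isLinearRetract_of_injective
    (h : IsCompletelyVirtuallySemisimple R M) (i : A →ₗ[R] B) (j : B →ₗ[R] M)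
    (hi : Function.Injective i) (hj : Function.Injective j) : IsLinearRetract R A B := by
  have hle : range (j ∘ₗ i) ≤ range j := range_comp_le_range i j
  exact (isCompletelyVirtuallySemisimple_iff_isLinearRetract.1 h _ _ hle).of_linearEquiv
    (LinearEquiv.ofInjective (j ∘ₗ i) (hj.comp hi)).symm (LinearEquiv.ofInjective j hj).symm

theorem IsCompletelyVirtuallySemisimple.of_injective (h : IsCompletelyVirtuallySemisimple R M')
    (f : M →ₗ[R] M') (hf : Function.Injective f) : IsCompletelyVirtuallySemisimple R M := by
  rw [isCompletelyVirtuallySemisimple_iff_isLinearRetract]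
  intro N Q hQN
  exact h.isLinearRetract_of_injective (Submodule.inclusion hQN) (f ∘ₗ N.subtype)
    (Submodule.inclusion_injective hQN) (hf.comp N.injective_subtype)

theorem IsCompletelyVirtuallySemisimple.projective_submodule [Module.Projective R M]
    (h : IsCompletelyVirtuallySemisimple R M) (N : Submodule R M) : Module.Projective R N :=
  (h.isLinearRetract_of_injective N.subtype LinearMap.id N.injective_subtype
    Function.injective_id).projective

end CompletelyVirtuallySemisimple

section Extension

variable {R : Type*} [Ring R] {E F M N P : Type*} [AddCommGroup E] [Module R E]
  [AddCommGroup F] [Module R F] [AddCommGroup M] [Module R M] [AddCommGroup N] [Module R N]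
  [AddCommGroup P] [Module R P]

theorem exists_linearEquiv_ker_prod_of_surjective [Module.Projective R P] (g : N →ₗ[R] P)
    (hg : Function.Surjective g) : Nonempty (N ≃ₗ[R] ker g × P) := by
  obtain ⟨l, hl⟩ := Module.projective_lifting_property g LinearMap.id hg
  exact ⟨((exact_subtype_ker_map g).splitSurjectiveEquiv (ker g).injective_subtype ⟨l, hl⟩).1⟩

theorem mem_ker_rangeRestrict_comp_subtype {p : E →ₗ[R] F} {W : Submodule R E} {x : W} :
    x ∈ ker (p ∘ₗ W.subtype).rangeRestrict ↔ (x : E) ∈ ker p := by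
  rw [ker_rangeRestrict, ker_comp]
  rfl

/-- Each submodule `W` of `E` splits as `(W ∩ ker p) × p(W)` because `p(W)` is projective, and
a retract `Q ≤ N` is then assembled from the retracts of the two factors. -/
theorem IsCompletelyVirtuallySemisimple.of_ker_of_range (p : E →ₗ[R] F)
    (hker : IsCompletelyVirtuallySemisimple R (ker p)) (hF : IsCompletelyVirtuallySemisimple R F)
    (hproj : ∀ I : Submodule R F, Module.Projective R I) : IsCompletelyVirtuallySemisimple R E := by
  rw [isCompletelyVirtuallySemisimple_iff_isLinearRetract]
  intro N Q hQN
  obtain ⟨eQ⟩ := exists_linearEquiv_ker_prod_of_surjective (p ∘ₗ Q.subtype).rangeRestrict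
    (surjective_rangeRestrict _)
  obtain ⟨eN⟩ := exists_linearEquiv_ker_prod_of_surjective (p ∘ₗ N.subtype).rangeRestrict
    (surjective_rangeRestrict _)
  have hker_retract : IsLinearRetract R (ker (p ∘ₗ Q.subtype).rangeRestrict)
      (ker (p ∘ₗ N.subtype).rangeRestrict) :=
    hker.isLinearRetract_of_injective
      ((Submodule.inclusion hQN ∘ₗ Submodule.subtype _).codRestrict _ fun x =>
        (mem_ker_rangeRestrict_comp_subtype (W := N)).2
          ((mem_ker_rangeRestrict_comp_subtype (W := Q)).1 x.2))
      ((N.subtype ∘ₗ Submodule.subtype _).codRestrict _ fun x =>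
        mem_ker_rangeRestrict_comp_subtype.1 x.2)
      ((injective_codRestrict_iff _).2 ((Submodule.inclusion_injective hQN).comp
        (Submodule.injective_subtype _)))
      ((injective_codRestrict_iff _).2 (N.injective_subtype.comp (Submodule.injective_subtype _)))
  have hrange_retract : IsLinearRetract R (range (p ∘ₗ Q.subtype)) (range (p ∘ₗ N.subtype)) := by
    refine isCompletelyVirtuallySemisimple_iff_isLinearRetract.1 hF _ _ ?_
    simpa only [range_comp, Submodule.range_subtype] using Submodule.map_mono hQN
  exact (hker_retract.prodMap hrange_retract).of_linearEquiv eQ.symm eN.symm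

theorem IsCompletelyVirtuallySemisimple.prod (hM : IsCompletelyVirtuallySemisimple R M)
    (hN : IsCompletelyVirtuallySemisimple R N)
    (hproj : ∀ I : Submodule R N, Module.Projective R I) :
    IsCompletelyVirtuallySemisimple R (N × M) := by
  refine .of_ker_of_range (fst R N M) (hM.of_injective (snd R N M ∘ₗ (ker (fst R N M)).subtype)
    fun x y hxy => ?_) hN hproj
  exact Subtype.ext (Prod.ext ((mem_ker.1 x.2).trans (mem_ker.1 y.2).symm) hxy)

end Extension

section Power

variable {R : Type*} [Ring R]

theorem IsCompletelyVirtuallySemisimple.pi_fin (hR : IsCompletelyVirtuallySemisimple R R) :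
    ∀ n : ℕ, IsCompletelyVirtuallySemisimple R (Fin n → R)
  | 0 => hR.of_injective 0 fun _ _ _ => Subsingleton.elim _ _
  | n + 1 => by
    have hprod := (hR.pi_fin n).prod hR hR.projective_submodule
    let e := Fin.consLinearEquiv R fun _ : Fin (n + 1) => R
    exact hprod.of_injective e.symm.toLinearMap e.symm.injective

end Power

namespace CategoryTheory

def IsCompletelyVirtuallySemisimpleObj {C : Type*} [Category C] (X : C) : Prop :=
  ∀ ⦃A B : C⦄ (i : A ⟶ B) (j : B ⟶ X), Mono i → Mono j → Nonempty (Retract A B)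

variable {C D : Type*} [Category C] [Category D]

theorem IsCompletelyVirtuallySemisimpleObj.map_equivalence {X : C}
    (h : IsCompletelyVirtuallySemisimpleObj X) (e : C ≌ D) :
    IsCompletelyVirtuallySemisimpleObj (e.functor.obj X) := by
  intro A B i j _ _
  obtain ⟨r⟩ := h (e.inverse.map i) (e.inverse.map j ≫ e.unitInv.app X) inferInstance
    inferInstance
  exact ⟨(Retract.ofIso (e.counitIso.app A).symm).trans
    ((r.map e.functor).trans (Retract.ofIso (e.counitIso.app B)))⟩

end CategoryTheory

open CategoryTheory

namespace ModuleCat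

variable {R S : Type*} [Ring R] [Ring S]

theorem isCompletelyVirtuallySemisimpleObj_iff (M : ModuleCat R) :
    IsCompletelyVirtuallySemisimpleObj M ↔ IsCompletelyVirtuallySemisimple R M := by
  rw [isCompletelyVirtuallySemisimple_iff_isLinearRetract]
  constructor
  · intro h N Q hQN
    have hi : Mono (ofHom (Submodule.inclusion hQN)) :=
      (mono_iff_injective _).2 (Submodule.inclusion_injective hQN)
    have hj : Mono (ofHom N.subtype) := (mono_iff_injective _).2 N.injective_subtype
    obtain ⟨r⟩ := h _ _ hi hj
    exact ⟨r.i.hom, r.r.hom, congrArg Hom.hom r.retract⟩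
  · intro h A B i j hi hj
    have hM := isCompletelyVirtuallySemisimple_iff_isLinearRetract.2 h
    obtain ⟨i', r', hri⟩ := hM.isLinearRetract_of_injective i.hom j.hom
      ((mono_iff_injective i).1 hi) ((mono_iff_injective j).1 hj)
    exact ⟨⟨ofHom i', ofHom r', hom_ext hri⟩⟩

theorem iSup_range_eq_top_of_isSeparator {G : ModuleCat S} (hG : IsSeparator G)
    (Y : ModuleCat S) : ⨆ f : G ⟶ Y, range f.hom = ⊤ := by
  set T := ⨆ f : G ⟶ Y, range f.hom
  have hmkQ : ofHom T.mkQ = 0 := hG.def _ _ fun f => by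
    ext x
    simpa using (le_iSup (fun f : G ⟶ Y => range f.hom) f) (mem_range_self f.hom x)
  rw [← Submodule.ker_mkQ T, ← hom_ofHom T.mkQ, hmkQ, hom_zero, ker_zero]

noncomputable def mapPiIso (F : ModuleCat R ⥤ ModuleCat S) [F.Additive] {J : Type} [Finite J]
    (M : ModuleCat R) : ModuleCat.of S (J → F.obj M) ≅ F.obj (ModuleCat.of R (J → M)) :=
  (biproductIsoPi fun _ => F.obj M).symm ≪≫ (F.mapBiproduct fun _ => M).symm ≪≫
    F.mapIso (biproductIsoPi fun _ => M)

end ModuleCat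

theorem exists_surjective_pi_fin_of_iSup_range_eq_top {S P Y ι : Type*} [Ring S]
    [AddCommGroup P] [Module S P] [AddCommGroup Y] [Module S Y] [Module.Finite S Y]
    (f : ι → P →ₗ[S] Y) (hf : ⨆ i, range (f i) = ⊤) :
    ∃ (n : ℕ) (φ : (Fin n → P) →ₗ[S] Y), Function.Surjective φ := by
  classical
  obtain ⟨s, hs⟩ := CompleteLattice.IsCompactElement.exists_finset_of_le_iSup _
    ((Submodule.fg_iff_compact ⊤).1 Module.Finite.fg_top) (fun i => range (f i)) hf.ge
  let φ : (s → P) →ₗ[S] Y := lsum S (fun _ => P) ℕ fun i => f i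
  have hφ : ∀ i ∈ s, range (f i) ≤ range φ := by
    rintro i hi _ ⟨x, rfl⟩
    exact ⟨Pi.single ⟨i, hi⟩ x, lsum_piSingle ..⟩
  refine ⟨_, φ ∘ₗ (LinearEquiv.funCongrLeft S P (Fintype.equivFin s)).toLinearMap,
    (range_eq_top.1 (top_le_iff.1 (hs.trans (iSup₂_le hφ)))).comp (LinearEquiv.surjective _)⟩

/-- `F(R)` need not be `S`, but it is a generator, so the finitely generated projective module `S`
is a direct summand of some `F(R)ⁿ ≅ F(Rⁿ)`. -/
theorem IsCompletelyVirtuallySemisimple.of_moduleCat_equivalence {R S : Type*} [Ring R] [Ring S]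
    [Small.{w} R] [Small.{w} S] (e : ModuleCat.{w} R ≌ ModuleCat.{w} S)
    (hR : IsCompletelyVirtuallySemisimple R R) : IsCompletelyVirtuallySemisimple S S := by
  let G := ModuleCat.of R (Shrink.{w} R)
  obtain ⟨n, φ, hφ⟩ := exists_surjective_pi_fin_of_iSup_range_eq_top
    (fun f : e.functor.obj G ⟶ ModuleCat.of S (Shrink.{w} S) => f.hom)
    (ModuleCat.iSup_range_eq_top_of_isSeparator ((ModuleCat.isSeparator R).of_equivalence e) _)
  obtain ⟨σ, hσ⟩ := Module.projective_lifting_property φ LinearMap.id hφ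
  have hσ_inj : Function.Injective σ := Function.LeftInverse.injective (LinearMap.congr_fun hσ)
  have hpow : IsCompletelyVirtuallySemisimple R (Fin n → Shrink.{w} R) :=
    let eR := LinearEquiv.piCongrRight fun _ : Fin n => Shrink.linearEquiv.{w} R R
    (hR.pi_fin n).of_injective eR.toLinearMap eR.injective
  have : e.functor.Additive := Functor.additive_of_preserves_binary_products _
  have hobj := (ModuleCat.isCompletelyVirtuallySemisimpleObj_iff (ModuleCat.of R _)).2 hpow
  have hFpow := (ModuleCat.isCompletelyVirtuallySemisimpleObj_iff _).1 (hobj.map_equivalence e)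
  let ψ := (ModuleCat.mapPiIso e.functor (J := Fin n) G).toLinearEquiv
  exact ((hFpow.of_injective ψ ψ.injective).of_injective σ hσ_inj).of_injective
    (Shrink.linearEquiv S S).symm.toLinearMap (LinearEquiv.injective _)

/-- If `R` and `S` are Morita equivalent rings (their categories of left modules are
equivalent), then `R` is left completely virtually semisimple iff `S` is. -/
theorem stmt_12 (R : Type u) [Ring R] (S : Type v) [Ring S]
    (h : Nonempty (ModuleCat.{max u v} R ≌ ModuleCat.{max u v} S)) :
    IsCompletelyVirtuallySemisimple R R ↔ IsCompletelyVirtuallySemisimple S S := by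
  obtain ⟨e⟩ := h
  exact ⟨.of_moduleCat_equivalence e, .of_moduleCat_equivalence e.symm⟩
end

section
/- A ring R is left virtually semisimple if and only if R is a semiprime principal left ideal ring. -/
/-!
A left ideal isomorphic to a direct summand `Re` is cyclic, so a left virtually semisimple ring
is a principal left ideal ring, hence left noetherian. If a two-sided ideal `I` has `I² = 0`, the
left ideal `A` of elements annihilated by `I` on the left contains `I` and is isomorphic to a
summand `K = Re`; as `I` annihilates `A` it annihilates `K`, so `K ∩ I = 0` (an `x ∈ K ∩ I` is
`x = xe = 0`). Thus `A × I` embeds into the noetherian module `A`, which forces `I = 0`.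

Conversely, for a left ideal `N` pick `C` maximal with `N ∩ C = 0`; then `N ⊕ C = Rw` is
essential. In a semiprime left noetherian ring no nonzero element has an essential left
annihilator, which keeps every `R wⁿ` essential, and Fitting's lemma for `r ↦ rw` then makes this
map injective. It identifies `R` with `N ⊕ C`, and the preimage of `N` is a direct summand
isomorphic to `N`.
-/

universe u v w

/-- A ring is *semiprime* if it has no nonzero two-sided ideal with square zero. -/
def IsSemiprimeRing (S : Type w) [Ring S] : Prop :=
  ∀ I : TwoSidedIdeal S, (∀ x ∈ I, ∀ y ∈ I, x * y = 0) → I = ⊥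

open Submodule LinearMap

namespace Submodule

variable {R M : Type*} [Ring R] [AddCommGroup M] [Module R M]

def IsEssential (N : Submodule R M) : Prop :=
  ∀ L : Submodule R M, Disjoint N L → L = ⊥

theorem IsEssential.mono {N N' : Submodule R M} (h : N.IsEssential) (hle : N ≤ N') :
    N'.IsEssential :=
  fun L hL => h L (hL.mono_left hle)

theorem IsEssential.exists_mem_ne_zero {N L : Submodule R M} (h : N.IsEssential) (hL : L ≠ ⊥) :
    ∃ x ∈ N, x ∈ L ∧ x ≠ 0 := by
  by_contra! H
  exact hL (h L (disjoint_def.mpr H))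

theorem IsEssential.comap {M' : Type*} [AddCommGroup M'] [Module R M'] {E : Submodule R M'}
    (h : E.IsEssential) (f : M →ₗ[R] M') : (E.comap f).IsEssential := by
  intro L hL
  by_cases hmap : L.map f = ⊥
  · have hle : L ≤ E.comap f := fun x hx => by
      have : f x = 0 := by simpa [hmap] using mem_map_of_mem (f := f) hx
      simp [this]
    exact disjoint_self.mp (hL.mono_left hle)
  · obtain ⟨_, hyE, ⟨x, hxL, rfl⟩, hy0⟩ := h.exists_mem_ne_zero hmap
    exact absurd (by simp [disjoint_def.mp hL x hyE hxL]) hy0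

theorem exists_disjoint_isEssential_sup [IsNoetherian R M] (N : Submodule R M) :
    ∃ C : Submodule R M, Disjoint N C ∧ (N ⊔ C).IsEssential := by
  obtain ⟨C, hC, hmax⟩ := set_has_maximal_iff_noetherian.mpr ‹_› {C | Disjoint N C}
    ⟨⊥, disjoint_bot_right⟩
  refine ⟨C, hC, fun L hL => ?_⟩
  have hLC : L ≤ C := by
    by_contra hLC
    exact hmax _ (hC.disjoint_sup_right_of_disjoint_sup_left hL)
      (left_lt_sup.mpr hLC)
  exact disjoint_self.mp (hL.mono_left (hLC.trans le_sup_right))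

theorem eq_bot_of_linearEquiv_of_disjoint [IsNoetherian R M] {K X : Submodule R M}
    (e : M ≃ₗ[R] K) (h : Disjoint K X) : X = ⊥ := by
  have hinj : Function.Injective ((K.subtype ∘ₗ e.toLinearMap).coprod X.subtype) := by
    rw [← ker_eq_bot, ker_coprod_of_disjoint_range]
    · simp [ker_comp]
    · simpa using h
  have := IsNoetherian.subsingleton_of_prod_injective _ hinj
  exact eq_bot_of_subsingleton

theorem isCompl_comap_of_range_eq_sup {M' : Type*} [AddCommGroup M'] [Module R M']
    {f : M →ₗ[R] M'} (hf : Function.Injective f) {N C : Submodule R M'} (hNC : Disjoint N C)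
    (hrange : range f = N ⊔ C) :
    IsCompl (N.comap f) (C.comap f) := by
  constructor
  · rw [disjoint_iff, ← comap_inf, disjoint_iff.mp hNC, comap_bot, ker_eq_bot.mpr hf]
  · rw [codisjoint_iff, ← comap_sup_of_injective hf (hrange ▸ le_sup_left)
      (hrange ▸ le_sup_right), ← hrange, range_le_iff_comap.mp le_rfl]

end Submodule

section Forward

variable {R : Type*} [Ring R]

theorem exists_mul_eq_self_of_isCompl {K K' : Submodule R R} (h : IsCompl K K') :
    ∃ e ∈ K, ∀ k ∈ K, k * e = k := by
  refine ⟨K.projectionOnto K' h 1, (K.projectionOnto K' h 1).2, fun k hk => ?_⟩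
  have := congrArg Subtype.val ((K.projectionOnto K' h).map_smul k 1)
  simpa [projectionOnto_apply_left h ⟨k, hk⟩] using this.symm

theorem IsVirtuallySemisimple.isPrincipalIdealRing (h : IsVirtuallySemisimple R R) :
    IsPrincipalIdealRing R := by
  refine ⟨fun N => ?_⟩
  obtain ⟨K, ⟨K', hK⟩, ⟨θ⟩⟩ := h N
  obtain ⟨e, he, hKe⟩ := exists_mul_eq_self_of_isCompl hK
  refine ⟨θ.symm ⟨e, he⟩, le_antisymm (fun y hy => ?_) (span_le.mpr (by simp))⟩
  have hθ : (θ ⟨y, hy⟩ : R) • (⟨e, he⟩ : K) = θ ⟨y, hy⟩ := Subtype.ext (hKe _ (θ ⟨y, hy⟩).2)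
  have hy' : (θ ⟨y, hy⟩ : R) • θ.symm ⟨e, he⟩ = ⟨y, hy⟩ := by
    rw [← map_smul, hθ, LinearEquiv.symm_apply_apply]
  exact mem_span_singleton.mpr ⟨θ ⟨y, hy⟩, congrArg Subtype.val hy'⟩

def TwoSidedIdeal.rightAnnihilator (I : TwoSidedIdeal R) :
    Submodule R R where
  carrier := {x | ∀ y ∈ I, y * x = 0}
  add_mem' hx hx' y hy := by simp [mul_add, hx y hy, hx' y hy]
  zero_mem' := by simp
  smul_mem' r x hx y hy := by simpa [mul_assoc] using hx _ (I.mul_mem_right y r hy)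

theorem IsVirtuallySemisimple.isSemiprimeRing (h : IsVirtuallySemisimple R R) :
    IsSemiprimeRing R := by
  have := h.isPrincipalIdealRing
  intro I hI
  set A := I.rightAnnihilator
  obtain ⟨K, ⟨K', hK⟩, ⟨θ⟩⟩ := h A
  obtain ⟨e, he, hKe⟩ := exists_mul_eq_self_of_isCompl hK
  have hKA : K ≤ A := fun k hk y hy => by
    have : y • θ.symm ⟨k, hk⟩ = 0 := Subtype.ext ((θ.symm ⟨k, hk⟩).2 y hy)
    simpa using congrArg (fun a => (θ a : R)) this
  have hIA : I.asIdeal ≤ A := fun x hx y hy => hI y hy x hx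
  have hKI : Disjoint (K.comap A.subtype) (Submodule.comap A.subtype I.asIdeal) := by
    refine disjoint_def.mpr fun x hxK hxI => Subtype.ext ?_
    exact (hKe x hxK).symm.trans (hKA he x hxI)
  have hI0 := eq_bot_of_linearEquiv_of_disjoint (θ.trans (comapSubtypeEquivOfLe hKA).symm) hKI
  refine TwoSidedIdeal.ext fun x => ⟨fun hx => ?_, fun hx => by simp_all⟩
  have hx' : (⟨x, hIA hx⟩ : A) ∈ Submodule.comap A.subtype I.asIdeal := hx
  simpa [hI0] using hx'

end Forward

section Backward

variable {R : Type*} [Ring R]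

def leftAnnihilator (x : R) : Submodule R R := ker (toSpanSingleton R R x)

@[simp]
theorem mem_leftAnnihilator {x r : R} : r ∈ leftAnnihilator x ↔ r * x = 0 := by
  simp [leftAnnihilator]

theorem leftAnnihilator_le_mul_right (x y : R) : leftAnnihilator x ≤ leftAnnihilator (x * y) :=
  fun r hr => by simp_all [← mul_assoc]

theorem IsSemiprimeRing.eq_zero_of_forall_mul_mul_eq_zero (hR : IsSemiprimeRing R) {z : R}
    (hz : ∀ r, z * r * z = 0) : z = 0 := by
  have hzy : ∀ y ∈ TwoSidedIdeal.span {z}, ∀ r, z * r * y = 0 := by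
    intro y hy
    induction hy using TwoSidedIdeal.span_induction with
    | mem y hy => rwa [Set.mem_singleton_iff.mp hy]
    | zero => simp
    | add y y' _ _ h h' => simp [mul_add, h, h']
    | neg y _ h => simp [h]
    | left_absorb a y _ h => intro r; simpa [mul_assoc] using h (r * a)
    | right_absorb b y _ h => intro r; simp [← mul_assoc, h r]
  have hxy : ∀ x ∈ TwoSidedIdeal.span {z}, ∀ y ∈ TwoSidedIdeal.span {z}, ∀ r, x * r * y = 0 := by
    intro x hx
    induction hx using TwoSidedIdeal.span_induction with
    | mem x hx => rw [Set.mem_singleton_iff.mp hx]; exact hzy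
    | zero => simp
    | add x x' _ _ h h' => intro y hy r; simp [add_mul, h y hy r, h' y hy r]
    | neg x _ h => intro y hy r; simp [h y hy r]
    | left_absorb a x _ h => intro y hy r; simp [mul_assoc, h y hy r]
    | right_absorb b x _ h => intro y hy r; simpa [mul_assoc] using h y hy (b * r)
  have hspan := hR _ fun x hx y hy => by simpa using hxy x hx y hy 1
  simpa [hspan] using TwoSidedIdeal.subset_span (s := {z}) rfl

theorem IsSemiprimeRing.not_isEssential_leftAnnihilator [IsNoetherianRing R]
    (hR : IsSemiprimeRing R) {a : R} (ha : a ≠ 0) : ¬ (leftAnnihilator a).IsEssential := by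
  intro hess
  -- For `y` with a maximal essential annihilator and `y r y ≠ 0`, `ann y = ann (y r y)`,
  -- so `ann y` cannot meet `R (y r)`.
  obtain ⟨_, ⟨y, hy0, hyess, rfl⟩, hmax⟩ := set_has_maximal_iff_noetherian.mpr ‹_›
    {S | ∃ y : R, y ≠ 0 ∧ (leftAnnihilator y).IsEssential ∧ S = leftAnnihilator y}
    ⟨_, a, ha, hess, rfl⟩
  obtain ⟨r, hr⟩ : ∃ r, y * r * y ≠ 0 := by
    by_contra! h
    exact hy0 (hR.eq_zero_of_forall_mul_mul_eq_zero h)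
  have hle : leftAnnihilator y ≤ leftAnnihilator (y * r * y) := fun s hs => by
    simp_all [← mul_assoc]
  have heq : leftAnnihilator (y * r * y) = leftAnnihilator y := by
    by_contra hne
    exact hmax _ ⟨_, hr, hyess.mono hle, rfl⟩ (lt_of_le_of_ne hle (Ne.symm hne))
  have hyr : R ∙ (y * r) ≠ ⊥ := by
    simpa using fun h : y * r = 0 => hr (by simp [h])
  obtain ⟨_, hq, hqs, hq0⟩ := hyess.exists_mem_ne_zero hyr
  obtain ⟨s, rfl⟩ := mem_span_singleton.mp hqs
  have hs : s ∈ leftAnnihilator (y * r * y) := by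
    simpa [mul_assoc] using hq
  rw [heq, mem_leftAnnihilator] at hs
  exact hq0 (by simp [smul_eq_mul, ← mul_assoc, hs])

theorem isEssential_span_singleton_mul
    (hZ : ∀ b : R, b ≠ 0 → ¬ (leftAnnihilator b).IsEssential) {x w : R}
    (hx : (R ∙ x).IsEssential) (hw : (R ∙ w).IsEssential) : (R ∙ (x * w)).IsEssential := by
  intro L hL
  by_contra hL0
  obtain ⟨_, ha, haL, ha0⟩ := hw.exists_mem_ne_zero hL0
  obtain ⟨r, rfl⟩ := mem_span_singleton.mp ha
  rw [smul_eq_mul] at haL ha0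
  -- As `ann (r w)` is not essential, some `u` with `u r ∈ R x + ann w` has `u r w ≠ 0`,
  -- and then `u r w ∈ R (x w) ∩ L`.
  have hP : ((R ∙ x ⊔ leftAnnihilator w).comap (toSpanSingleton R R r)).IsEssential :=
    (hx.mono le_sup_left).comap _
  obtain ⟨u, huP, hu⟩ := SetLike.not_le_iff_exists.mp fun hle => hZ _ ha0 (hP.mono hle)
  rw [mem_comap, toSpanSingleton_apply, smul_eq_mul, mem_sup] at huP
  obtain ⟨_, hc, s, hs, hcs⟩ := huP
  obtain ⟨c, rfl⟩ := mem_span_singleton.mp hc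
  rw [mem_leftAnnihilator] at hs hu
  have hmem : u * (r * w) ∈ R ∙ (x * w) := mem_span_singleton.mpr
    ⟨c, by rw [smul_eq_mul] at hcs ⊢; rw [← mul_assoc u, ← hcs, add_mul, hs, add_zero, mul_assoc]⟩
  exact hu (disjoint_def.mp hL _ hmem (by simpa using L.smul_mem u haL))

theorem LinearMap.toSpanSingleton_pow (w : R) (n : ℕ) :
    toSpanSingleton R R w ^ n = toSpanSingleton R R (w ^ n) := by
  induction n with
  | zero => ext; simp
  | succ n ih => rw [pow_succ, ih]; ext; simp [pow_succ']

theorem leftAnnihilator_eq_bot_of_isEssential [IsNoetherianRing R]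
    (hZ : ∀ b : R, b ≠ 0 → ¬ (leftAnnihilator b).IsEssential) {w : R}
    (hw : (R ∙ w).IsEssential) : leftAnnihilator w = ⊥ := by
  have hpow : ∀ n, (R ∙ w ^ n).IsEssential := fun n => by
    induction n with
    | zero => intro L hL; simpa using hL
    | succ n ih => rw [pow_succ]; exact isEssential_span_singleton_mul hZ ih hw
  obtain ⟨n, hn, hn1⟩ :=
    ((Module.End.eventually_disjoint_ker_pow_range_pow (toSpanSingleton R R w)).and
      (Filter.eventually_ge_atTop 1)).exists
  obtain ⟨m, rfl⟩ : ∃ m, n = m + 1 := ⟨n - 1, by omega⟩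
  rw [toSpanSingleton_pow, ← LinearMap.span_singleton_eq_range] at hn
  rw [eq_bot_iff, ← hpow (m + 1) _ hn.symm, pow_succ']
  exact leftAnnihilator_le_mul_right w (w ^ m)

theorem IsSemiprimeRing.isVirtuallySemisimple [IsPrincipalIdealRing R]
    (hR : IsSemiprimeRing R) : IsVirtuallySemisimple R R := by
  intro N
  obtain ⟨C, hNC, hess⟩ := exists_disjoint_isEssential_sup N
  obtain ⟨w, hw⟩ := (IsPrincipalIdealRing.principal (N ⊔ C)).principal
  have hrange : range (toSpanSingleton R R w) = N ⊔ C := by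
    rw [hw, LinearMap.span_singleton_eq_range]
  have hinj : Function.Injective (toSpanSingleton R R w) := ker_eq_bot.mp <|
    leftAnnihilator_eq_bot_of_isEssential (fun _ hb => hR.not_isEssential_leftAnnihilator hb)
      (hw ▸ hess)
  refine ⟨N.comap _, ⟨C.comap _, isCompl_comap_of_range_eq_sup hinj hNC hrange⟩, ⟨?_⟩⟩
  exact ((equivMapOfInjective _ hinj _).trans
    (LinearEquiv.ofEq _ _ (map_comap_eq_of_le (hrange ▸ le_sup_left)))).symm

end Backward

/-- A ring `R` is left virtually semisimple iff it is a semiprime principal left ideal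
ring. -/
theorem stmt_15 (R : Type u) [Ring R] :
    IsVirtuallySemisimple R R ↔ (IsSemiprimeRing R ∧ IsPrincipalIdealRing R) := by
  refine ⟨fun h => ⟨h.isSemiprimeRing, h.isPrincipalIdealRing⟩, ?_⟩
  rintro ⟨hR, _⟩
  exact hR.isVirtuallySemisimple
end

section
/- A ring R is left virtually semisimple if and only if R is a left hereditary principal left ideal ring. -/
universe u v w

/-!
The modules isomorphic to a direct summand of `R` are exactly the projective cyclic ones: a summand
is a retract of the free module `R`, generated by the image of `1` under the projection; conversely
a cyclic module is a quotient of `R`, and this quotient map splits when the module is projective.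
Applied to the left ideals of `R`, this is the theorem.
-/

section DirectSummand

variable {R M P : Type*} [Ring R] [AddCommGroup M] [Module R M] [AddCommGroup P] [Module R P]

theorem Submodule.projective_of_isCompl [Module.Projective R M] {p q : Submodule R M}
    (h : IsCompl p q) : Module.Projective R p :=
  .of_split p.subtype (p.projectionOnto q h) (p.projectionOnto_comp_subtype h)

theorem Submodule.isPrincipal_of_isCompl [Module.IsPrincipal R M] {p q : Submodule R M}
    (h : IsCompl p q) : Module.IsPrincipal R p :=
  .of_surjective _ (p.projectionOnto_surjective h)

theorem LinearMap.exists_isCompl_and_linearEquiv_of_surjective [Module.Projective R P]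
    (f : M →ₗ[R] P) (hf : Function.Surjective f) :
    ∃ p : Submodule R M, (∃ q : Submodule R M, IsCompl p q) ∧ Nonempty (P ≃ₗ[R] p) := by
  obtain ⟨s, hs⟩ := Module.projective_lifting_property f LinearMap.id hf
  have hfs : ∀ x, f (s x) = x := LinearMap.congr_fun hs
  let π : M →ₗ[R] range s := codRestrict _ (s ∘ₗ f) fun x ↦ mem_range_self s (f x)
  have hπ : ∀ y : range s, π y = y := by
    rintro ⟨_, x, rfl⟩
    exact Subtype.ext (congrArg s (hfs x))
  exact ⟨range s, ⟨ker π, isCompl_of_proj hπ⟩,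
    ⟨LinearEquiv.ofInjective s (Function.LeftInverse.injective hfs)⟩⟩

theorem Module.IsPrincipal.exists_surjective_linearMap_of_ring [Module.IsPrincipal R P] :
    ∃ f : R →ₗ[R] P, Function.Surjective f := by
  obtain ⟨g, hg⟩ := Submodule.IsPrincipal.principal (⊤ : Submodule R P)
  refine ⟨LinearMap.toSpanSingleton R P g, LinearMap.range_eq_top.mp ?_⟩
  rw [LinearMap.range_toSpanSingleton, hg]

variable (R P) in
theorem exists_isCompl_linearEquiv_iff_projective_and_isPrincipal :
    (∃ K : Submodule R R, (∃ K' : Submodule R R, IsCompl K K') ∧ Nonempty (P ≃ₗ[R] K)) ↔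
      Module.Projective R P ∧ Module.IsPrincipal R P := by
  constructor
  · rintro ⟨K, ⟨K', hK⟩, ⟨e⟩⟩
    have := Submodule.projective_of_isCompl hK
    exact ⟨.of_equiv' e.symm,
      e.isPrincipal_iff.mpr (Submodule.isPrincipal_of_isCompl hK)⟩
  · rintro ⟨_, _⟩
    obtain ⟨f, hf⟩ := Module.IsPrincipal.exists_surjective_linearMap_of_ring (R := R) (P := P)
    exact f.exists_isCompl_and_linearEquiv_of_surjective hf

end DirectSummand

/-- A ring `R` is left virtually semisimple iff it is a left hereditary principal left
ideal ring (every left ideal is projective and principal). -/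
theorem stmt_16 (R : Type u) [Ring R] :
    IsVirtuallySemisimple R R ↔
      ((∀ I : Ideal R, Module.Projective R I) ∧ IsPrincipalIdealRing R) := by
  have principal_iff : IsPrincipalIdealRing R ↔ ∀ I : Ideal R, Module.IsPrincipal R I :=
    ⟨fun h I ↦ Module.isPrincipal_submodule_iff.mpr (h.principal I),
      fun h ↦ ⟨fun I ↦ Module.isPrincipal_submodule_iff.mp (h I)⟩⟩
  rw [principal_iff, ← forall_and]
  exact forall_congr' fun I ↦ exists_isCompl_linearEquiv_iff_projective_and_isPrincipal R I
end

section
/- Let D₁, …, D_k and D′₁, …, D′_r be left Noetherian (not necessarily commutative) domains and let n₁, …, n_k and m₁, …, m_r be positive integers such that the product rings ∏_{i=1}^{k} M_{n_i}(D_i) and ∏_{j=1}^{r} M_{m_j}(D′_j) are isomorphic as rings. Then k = r and there exists a permutation ξ of {1, …, k} such that n_i = m_{ξ(i)} for every i. -/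
/-!
A ring isomorphism preserves primitive central idempotents. In a product of nontrivial rings
without nontrivial central idempotents (such as matrix rings over domains), these are exactly the
unit vectors `Pi.single i 1`, so the isomorphism matches the factors bijectively and restricts to
isomorphisms `M_{nᵢ}(Dᵢ) ≃+* M_{m_ξ(i)}(D′_ξ(i))`. In `Mₙ(D)` the `n` idempotents `Eᵢᵢ`
are nonzero and orthogonal, while any nonzero orthogonal idempotents `E₁, …, E_N` have rows that are
linearly independent in `Dⁿ`; over a left Noetherian domain this forces `N ≤ n`, so matrix sizes
are invariant under ring isomorphism.
-/

class HasTrivialCentralIdempotents (R : Type*) [Semiring R] : Prop where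
  eq_zero_or_one_of_mem_center (x : R) :
    IsIdempotentElem x → x ∈ Set.center R → x = 0 ∨ x = 1

open HasTrivialCentralIdempotents

instance IsDomain.hasTrivialCentralIdempotents (R : Type*) [Ring R]
    [IsDomain R] : HasTrivialCentralIdempotents R :=
  ⟨fun _ hx _ => IsIdempotentElem.iff_eq_zero_or_one.mp hx⟩

instance Matrix.hasTrivialCentralIdempotents (n R : Type*) [Fintype n] [DecidableEq n]
    [Semiring R] [HasTrivialCentralIdempotents R] :
    HasTrivialCentralIdempotents (Matrix n n R) := by
  refine ⟨fun x hx hc => ?_⟩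
  rw [Matrix.center_eq_scalar_image] at hc
  obtain ⟨d, hd, rfl⟩ := hc
  cases isEmpty_or_nonempty n
  · exact .inl (Subsingleton.elim _ _)
  have hd_idem : IsIdempotentElem d :=
    Matrix.scalar_inj.mp (by rw [map_mul (Matrix.scalar n), hx.eq])
  rcases eq_zero_or_one_of_mem_center d hd_idem hd with rfl | rfl <;> simp

/-- The last field says that `c = c * d + c * (1 - d)` never splits `c` into two nonzero
orthogonal central idempotents. -/
structure IsPrimitiveCentralIdempotent {R : Type*} [Semiring R] (c : R) : Prop where
  ne_zero : c ≠ 0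
  isIdempotentElem : IsIdempotentElem c
  mem_center : c ∈ Set.center R
  mul_eq_zero_or_self (d : R) :
    IsIdempotentElem d → d ∈ Set.center R → c * d = 0 ∨ c * d = c

theorem IsPrimitiveCentralIdempotent.map {R S : Type*} [Semiring R] [Semiring S] (f : R ≃+* S)
    {c : R} (hc : IsPrimitiveCentralIdempotent c) : IsPrimitiveCentralIdempotent (f c) where
  ne_zero := (map_ne_zero_iff f f.injective).mpr hc.ne_zero
  isIdempotentElem := hc.isIdempotentElem.map f
  mem_center := MulEquivClass.apply_mem_center f hc.mem_center
  mul_eq_zero_or_self d hd hdc := by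
    have hcd := hc.mul_eq_zero_or_self (f.symm d) (hd.map f.symm)
      (MulEquivClass.apply_mem_center f.symm hdc)
    rcases hcd with h | h
    · exact .inl (by simpa using congrArg f h)
    · exact .inr (by simpa using congrArg f h)

theorem RingEquiv.isPrimitiveCentralIdempotent_apply_iff {R S : Type*} [Semiring R] [Semiring S]
    (f : R ≃+* S) {c : R} :
    IsPrimitiveCentralIdempotent (f c) ↔ IsPrimitiveCentralIdempotent c :=
  ⟨fun h => by simpa using h.map f.symm, (·.map f)⟩

namespace Pi

variable {ι : Type*} {R : ι → Type*} [∀ i, Semiring (R i)]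

theorem apply_mem_center {c : ∀ i, R i} (hc : c ∈ Set.center (∀ i, R i)) (i : ι) :
    c i ∈ Set.center (R i) := by
  rw [Set.center_pi] at hc
  exact hc i trivial

variable [DecidableEq ι]

theorem single_one_mul (i : ι) (x : ∀ i, R i) : single i 1 * x = single i (x i) := by
  rw [← single_mul_left, one_mul]

theorem single_one_mem_center (i : ι) : single i (1 : R i) ∈ Set.center (∀ i, R i) := by
  rw [Set.center_pi]
  intro l _
  rcases eq_or_ne l i with rfl | h
  · simp
  · simp [h]

theorem isIdempotentElem_single_one (i : ι) : IsIdempotentElem (single i (1 : R i)) := by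
  rw [IsIdempotentElem, single_one_mul, single_eq_same]

variable [∀ i, Nontrivial (R i)] [∀ i, HasTrivialCentralIdempotents (R i)]

theorem isPrimitiveCentralIdempotent_single_one (i : ι) :
    IsPrimitiveCentralIdempotent (single i (1 : R i)) where
  ne_zero := by simp
  isIdempotentElem := isIdempotentElem_single_one i
  mem_center := single_one_mem_center i
  mul_eq_zero_or_self d hd hdc := by
    rw [single_one_mul]
    rcases eq_zero_or_one_of_mem_center (d i) (congrFun hd i) (apply_mem_center hdc i)
      with h | h <;> simp [h]

theorem isPrimitiveCentralIdempotent_iff {c : ∀ i, R i} :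
    IsPrimitiveCentralIdempotent c ↔ ∃ i, c = single i 1 := by
  refine ⟨fun hc => ?_, fun ⟨i, hi⟩ => hi ▸ isPrimitiveCentralIdempotent_single_one i⟩
  obtain ⟨i, hi⟩ : ∃ i, c i ≠ 0 := by
    by_contra! h
    exact hc.ne_zero (funext h)
  have hci : c i = 1 := (eq_zero_or_one_of_mem_center (c i) (congrFun hc.isIdempotentElem i)
    (apply_mem_center hc.mem_center i)).resolve_left hi
  have hcd : c * single i 1 = single i 1 := by rw [← single_mul_right, hci, one_mul]
  refine ⟨i, ?_⟩
  rcases hc.mul_eq_zero_or_self _ (isIdempotentElem_single_one i) (single_one_mem_center i)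
    with h | h
  · exact absurd (hcd ▸ h) (isPrimitiveCentralIdempotent_single_one i).ne_zero
  · rw [← h, hcd]

noncomputable def primitiveCentralIdempotentEquiv :
    ι ≃ {c : ∀ i, R i // IsPrimitiveCentralIdempotent c} := by
  refine .ofBijective (fun i => ⟨single i 1, isPrimitiveCentralIdempotent_single_one i⟩)
    ⟨fun i j hij => ?_, fun ⟨c, hc⟩ => ?_⟩
  · by_contra h
    simpa [single_eq_of_ne h] using congrFun (congrArg Subtype.val hij) i
  · obtain ⟨i, rfl⟩ := isPrimitiveCentralIdempotent_iff.mp hc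
    exact ⟨i, rfl⟩

end Pi

namespace RingEquiv

variable {ι κ : Type*} [DecidableEq ι] [DecidableEq κ] {R : ι → Type*} {S : κ → Type*}
  [∀ i, Semiring (R i)] [∀ j, Semiring (S j)]

theorem map_single_eq_single_of_map_single_one (e : (∀ i, R i) ≃+* ∀ j, S j) {i : ι} {j : κ}
    (h : e (Pi.single i 1) = Pi.single j 1) (a : R i) :
    e (Pi.single i a) = Pi.single j (e (Pi.single i a) j) := by
  calc e (Pi.single i a) = e (Pi.single i 1 * Pi.single i a) := by
        rw [Pi.single_one_mul, Pi.single_eq_same]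
    _ = Pi.single j 1 * e (Pi.single i a) := by rw [map_mul, h]
    _ = Pi.single j (e (Pi.single i a) j) := Pi.single_one_mul j _

def piFactorEquiv (e : (∀ i, R i) ≃+* ∀ j, S j) {i : ι} {j : κ}
    (h : e (Pi.single i 1) = Pi.single j 1) : R i ≃+* S j where
  toFun a := e (Pi.single i a) j
  invFun b := e.symm (Pi.single j b) i
  left_inv a := by
    simp only
    rw [← map_single_eq_single_of_map_single_one e h, symm_apply_apply, Pi.single_eq_same]
  right_inv b := by
    have h' : e.symm (Pi.single j 1) = Pi.single i 1 := e.symm_apply_eq.mpr h.symm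
    simp only
    rw [← map_single_eq_single_of_map_single_one e.symm h', apply_symm_apply, Pi.single_eq_same]
  map_mul' a b := by simp only [Pi.single_mul, map_mul, Pi.mul_apply]
  map_add' a b := by simp only [Pi.single_add, map_add, Pi.add_apply]

variable [∀ i, Nontrivial (R i)] [∀ i, HasTrivialCentralIdempotents (R i)]
  [∀ j, Nontrivial (S j)] [∀ j, HasTrivialCentralIdempotents (S j)]

noncomputable def piIndexEquiv (e : (∀ i, R i) ≃+* ∀ j, S j) : ι ≃ κ :=
  Pi.primitiveCentralIdempotentEquiv.trans <|
    (e.toEquiv.subtypeEquiv fun _ => e.isPrimitiveCentralIdempotent_apply_iff.symm).trans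
      Pi.primitiveCentralIdempotentEquiv.symm

theorem map_single_one (e : (∀ i, R i) ≃+* ∀ j, S j) (i : ι) :
    e (Pi.single i 1) = Pi.single (e.piIndexEquiv i) 1 :=
  congrArg Subtype.val (Pi.primitiveCentralIdempotentEquiv.apply_symm_apply
    ⟨e (Pi.single i 1), e.isPrimitiveCentralIdempotent_apply_iff.mpr
      (Pi.isPrimitiveCentralIdempotent_single_one i)⟩).symm

end RingEquiv

namespace Matrix

variable {n D : Type*} [Fintype n] [DecidableEq n]

theorem orthogonalIdempotents_single_one [Semiring D] :
    OrthogonalIdempotents fun i : n => single i i (1 : D) := by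
  refine OrthogonalIdempotents.iff_mul_eq.mpr fun i j => ?_
  rcases eq_or_ne i j with rfl | h
  · simp
  · simp [h]

theorem card_le_of_orthogonalIdempotents [Ring D] [NoZeroDivisors D] [StrongRankCondition D]
    {ι : Type*} [Fintype ι] {E : ι → Matrix n n D} (hE : OrthogonalIdempotents E)
    (hE0 : ∀ i, E i ≠ 0) : Fintype.card ι ≤ Fintype.card n := by
  classical
  have hentry : ∀ i, ∃ a b, E i a b ≠ 0 := fun i => by
    by_contra! h
    exact hE0 i (ext h)
  choose a b hab using hentry
  suffices LinearIndependent D fun i => E i (a i) by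
    simpa [Module.finrank_fintype_fun_eq_card] using this.fintype_card_le_finrank
  rw [Fintype.linearIndependent_iff]
  intro g hg j
  have hrow : ∀ i, (E i (a i) ᵥ* E j) (b j) = if i = j then E j (a j) (b j) else 0 := by
    intro i
    rw [← mul_apply_eq_vecMul, hE.mul_eq]
    split_ifs with h
    · rw [h]
    · rfl
  have hgj := congrArg (fun w => (w ᵥ* E j) (b j)) hg
  simp only [sum_vecMul, smul_vecMul, zero_vecMul, Finset.sum_apply, Pi.smul_apply, hrow,
    smul_eq_mul, mul_ite, mul_zero, Finset.sum_ite_eq', Finset.mem_univ, if_true,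
    Pi.zero_apply] at hgj
  exact (mul_eq_zero.mp hgj).resolve_right (hab j)

theorem card_le_card_of_ringEquiv {m D D' : Type*} [Fintype m] [DecidableEq m] [Ring D]
    [Nontrivial D] [Ring D'] [NoZeroDivisors D'] [StrongRankCondition D']
    (e : Matrix m m D ≃+* Matrix n n D') : Fintype.card m ≤ Fintype.card n :=
  card_le_of_orthogonalIdempotents (orthogonalIdempotents_single_one.map e.toRingHom)
    fun i => (map_ne_zero_iff e e.injective).mpr (ne_of_apply_ne (· i i) (by simp))

theorem card_eq_card_of_ringEquiv {m D D' : Type*} [Fintype m] [DecidableEq m] [Ring D]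
    [IsDomain D] [StrongRankCondition D] [Ring D'] [IsDomain D'] [StrongRankCondition D']
    (e : Matrix m m D ≃+* Matrix n n D') : Fintype.card m = Fintype.card n :=
  (card_le_card_of_ringEquiv e).antisymm (card_le_card_of_ringEquiv e.symm)

end Matrix

/-- Uniqueness of the matrix sizes in a product-of-matrix-rings decomposition over left
Noetherian domains: if `∏ᵢ Mₙᵢ(Dᵢ) ≅ ∏ⱼ Mₘⱼ(D′ⱼ)` as rings, then the number of factors
agrees and the sizes agree up to a permutation. -/
theorem stmt_18 (k r : ℕ) (n : Fin k → ℕ) (m : Fin r → ℕ)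
    (hn : ∀ i, 0 < n i) (hm : ∀ j, 0 < m j)
    (D : Fin k → Type u) [∀ i, Ring (D i)] (D' : Fin r → Type v) [∀ j, Ring (D' j)]
    (hD : ∀ i, IsDomain (D i)) (hD' : ∀ j, IsDomain (D' j))
    (hDnoeth : ∀ i, IsNoetherianRing (D i)) (hD'noeth : ∀ j, IsNoetherianRing (D' j))
    (e : (∀ i, Matrix (Fin (n i)) (Fin (n i)) (D i)) ≃+*
      ∀ j, Matrix (Fin (m j)) (Fin (m j)) (D' j)) :
    k = r ∧ ∃ ξ : Fin k ≃ Fin r, ∀ i, n i = m (ξ i) := by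
  have (i : Fin k) : NeZero (n i) := ⟨(hn i).ne'⟩
  have (j : Fin r) : NeZero (m j) := ⟨(hm j).ne'⟩
  let ξ := e.piIndexEquiv
  refine ⟨Fin.equiv_iff_eq.mp ⟨ξ⟩, ξ, fun i => ?_⟩
  simpa using Matrix.card_eq_card_of_ringEquiv (e.piFactorEquiv (e.map_single_one i))
end
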